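/- arXiv:2202.02307 — 5 statements merged into one kernel-verified Lean document; each statement's English description precedes it below -/
import Mathlib

section
/- Let p_{XY} and q_{XY} be two joint pmfs on a finite set 𝒳 × 𝒴 and set Θ := ‖p_{XY} − q_{XY}‖_TV. If 0 < Θ ≤ 1/(2e), then |H_p(Y|X) − H_q(Y|X)| ≤ −5Θ·log₂(4Θ/|𝒴|). -/
/-!
Write `r := (p - q)⁺`, so that `m := q + r` dominates `p` and has total mass `1 + Θ`.
Measured in nats, Gibbs' inequality on each fibre gives `H_p(Y|X) ≤ ∑ p log (m_X / m)`, and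
since `p ≤ q + r ≤ m_X` this is at most `∑ q log (m_X / q) + ∑ r log (m_X / r)`. By the chain
rule the first sum is `H_q(Y|X) + ∑ q_X log (m_X / q_X)`, and by the log-sum inequality the
marginal term is at most `log (1 + Θ)` while the second sum is at most
`Θ log (|𝒴| (1 + Θ) / Θ)`. For `Θ ≤ 1/(2e)` and `|𝒴| ≥ 2` an elementary estimate bounds
`log (1 + Θ) + Θ log (|𝒴| (1 + Θ) / Θ)` by `-5 Θ log (4 Θ / |𝒴|)`; if `|𝒴| ≤ 1` both
entropies vanish.
-/

open Real

/-- Conditional Shannon entropy (base 2) `H_p(Y|X)` of a joint pmf `p` on `𝒳 × 𝒴`: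
`H_p(Y|X) = −∑_{x,y} p(x,y)·log₂(p(x,y)/p_X(x))` (terms with `p(x,y)=0` vanish,
since `0 · log₂(anything) = 0` and `log₂ 0 = 0` by convention in Mathlib). -/
noncomputable def condEntropy2 {𝒳 𝒴 : Type*} [Fintype 𝒳] [Fintype 𝒴]
    (p : 𝒳 × 𝒴 → ℝ) : ℝ :=
  -∑ x, ∑ y, p (x, y) * Real.logb 2 (p (x, y) / ∑ y', p (x, y'))

open Finset

theorem mul_log_div_le {u c t : ℝ} (hu : 0 ≤ u) (hc : 0 ≤ c) (huc : c = 0 → u = 0)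
    (ht : 0 < t) :
    u * log (c / u) ≤ u * log t + c / t - u := by
  rcases hu.eq_or_lt with rfl | hu
  · simp only [zero_mul, zero_add, sub_zero]
    positivity
  have hc : 0 < c := hc.lt_of_ne fun h => hu.ne' (huc h.symm)
  calc u * log (c / u) = u * log t + u * log (c / (u * t)) := by
        rw [← mul_add, ← log_mul ht.ne' (by positivity)]
        field_simp
    _ ≤ u * log t + u * (c / (u * t) - 1) := by
        gcongr
        exact log_le_sub_one_of_pos (by positivity)
    _ = u * log t + c / t - u := by
        field_simp
        ring

theorem mul_log_div_le_mul_log_div_of_le {b m M : ℝ} (hb : 0 ≤ b) (hbm : b ≤ m) (hmM : m ≤ M) :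
    b * log (M / m) ≤ b * log (M / b) := by
  rcases hb.eq_or_lt with rfl | hb
  · simp
  have hm : 0 < m := hb.trans_le hbm
  have hM : 0 < M := hm.trans_le hmM
  gcongr

theorem mul_log_div_add_le {a b c M : ℝ} (hb : 0 ≤ b) (hc : 0 ≤ c) (habc : a ≤ b + c)
    (hM : b + c ≤ M) : a * log (M / (b + c)) ≤ b * log (M / b) + c * log (M / c) := by
  rcases (add_nonneg hb hc).eq_or_lt with hbc | hbc
  · obtain ⟨rfl, rfl⟩ : b = 0 ∧ c = 0 := ⟨by linarith, by linarith⟩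
    simp
  calc a * log (M / (b + c)) ≤ (b + c) * log (M / (b + c)) := by
        gcongr
        exact log_nonneg ((one_le_div hbc).mpr hM)
    _ = b * log (M / (b + c)) + c * log (M / (b + c)) := add_mul _ _ _
    _ ≤ b * log (M / b) + c * log (M / c) :=
        add_le_add (mul_log_div_le_mul_log_div_of_le hb (le_add_of_nonneg_right hc) hM)
          (mul_log_div_le_mul_log_div_of_le hc (le_add_of_nonneg_left hb) hM)

section LogSum

variable {ι : Type*} (s : Finset ι)

theorem sum_mul_log_div_le {u c : ι → ℝ} (hu : ∀ i ∈ s, 0 ≤ u i) (hc : ∀ i ∈ s, 0 ≤ c i)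
    (huc : ∀ i ∈ s, c i = 0 → u i = 0) :
    ∑ i ∈ s, u i * log (c i / u i) ≤
      (∑ i ∈ s, u i) * log ((∑ i ∈ s, c i) / ∑ i ∈ s, u i) := by
  rcases (sum_nonneg hu).eq_or_lt with hU | hU
  · have hu0 : ∀ i ∈ s, u i = 0 := (sum_eq_zero_iff_of_nonneg hu).mp hU.symm
    rw [← hU, zero_mul]
    exact (sum_eq_zero fun i hi => by rw [hu0 i hi, zero_mul]).le
  set U := ∑ i ∈ s, u i
  set C := ∑ i ∈ s, c i
  have hC : 0 < C := (sum_nonneg hc).lt_of_ne fun h => hU.ne' <|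
    sum_eq_zero fun i hi => huc i hi ((sum_eq_zero_iff_of_nonneg hc).mp h.symm i hi)
  calc ∑ i ∈ s, u i * log (c i / u i)
      ≤ ∑ i ∈ s, (u i * log (C / U) + c i / (C / U) - u i) :=
        sum_le_sum fun i hi => mul_log_div_le (hu i hi) (hc i hi) (huc i hi) (by positivity)
    _ = U * log (C / U) := by
        rw [sum_sub_distrib, sum_add_distrib, ← sum_mul, ← sum_div]
        field_simp
        ring

theorem sum_mul_log_sum_div_le_of_le {f g : ι → ℝ} (hf : ∀ i ∈ s, 0 ≤ f i)
    (hfg : ∀ i ∈ s, f i ≤ g i) :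
    ∑ i ∈ s, f i * log ((∑ j ∈ s, f j) / f i) ≤ ∑ i ∈ s, f i * log ((∑ j ∈ s, g j) / g i) := by
  rcases (sum_nonneg hf).eq_or_lt with hF | hF
  · have hf0 : ∀ i ∈ s, f i = 0 := (sum_eq_zero_iff_of_nonneg hf).mp hF.symm
    rw [sum_eq_zero fun i hi => by rw [hf0 i hi, zero_mul],
      sum_eq_zero fun i hi => by rw [hf0 i hi, zero_mul]]
  set F := ∑ j ∈ s, f j
  set G := ∑ j ∈ s, g j
  have hG : 0 < G := hF.trans_le (sum_le_sum hfg)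
  have hg : ∀ i ∈ s, 0 ≤ g i := fun i hi => (hf i hi).trans (hfg i hi)
  -- log-sum inequality against `g` rescaled to the mass of `f`
  have hlogsum := sum_mul_log_div_le s (u := f) (c := fun i => F * g i / G) hf
    (fun i hi => by have := hg i hi; positivity) fun i hi h => by
      have hgi : g i = 0 := by simpa [hF.ne', hG.ne'] using h
      exact le_antisymm (hgi ▸ hfg i hi) (hf i hi)
  have hc : ∑ i ∈ s, F * g i / G = F := by
    rw [← sum_div, ← mul_sum, mul_div_assoc, div_self hG.ne', mul_one]
  rw [hc, div_self hF.ne', log_one, mul_zero] at hlogsum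
  have hsplit : ∀ i ∈ s, f i * log (F / f i) =
      f i * log (F * g i / G / f i) + f i * log (G / g i) := fun i hi => by
    rcases (hf i hi).eq_or_lt with h | h
    · simp [← h]
    have hgi : 0 < g i := h.trans_le (hfg i hi)
    rw [← mul_add, ← log_mul (by positivity) (by positivity)]
    field_simp
  rw [sum_congr rfl hsplit, sum_add_distrib]
  linarith

theorem sum_mul_log_div_eq_add {f : ι → ℝ} {M : ℝ} (hf : ∀ i ∈ s, 0 ≤ f i)
    (hM : ∑ i ∈ s, f i ≤ M) :
    ∑ i ∈ s, f i * log (M / f i) =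
      ∑ i ∈ s, f i * log ((∑ j ∈ s, f j) / f i) + (∑ i ∈ s, f i) * log (M / ∑ i ∈ s, f i) := by
  rw [sum_mul, ← sum_add_distrib]
  refine sum_congr rfl fun i hi => ?_
  rcases (hf i hi).eq_or_lt with h | h
  · simp [← h]
  have hF : 0 < ∑ j ∈ s, f j := h.trans_le (single_le_sum hf hi)
  have hM' : 0 < M := hF.trans_le hM
  rw [← mul_add, ← log_mul (by positivity) (by positivity)]
  field_simp

end LogSum

noncomputable def condEntropy {𝒳 𝒴 : Type*} [Fintype 𝒳] [Fintype 𝒴] (p : 𝒳 × 𝒴 → ℝ) : ℝ :=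
  ∑ x, ∑ y, p (x, y) * log ((∑ y', p (x, y')) / p (x, y))

theorem condEntropy2_eq_condEntropy_div_log_two {𝒳 𝒴 : Type*} [Fintype 𝒳] [Fintype 𝒴]
    (p : 𝒳 × 𝒴 → ℝ) : condEntropy2 p = condEntropy p / log 2 := by
  rw [condEntropy2, condEntropy, sum_div, ← sum_neg_distrib]
  refine sum_congr rfl fun x _ => ?_
  rw [sum_div, ← sum_neg_distrib]
  refine sum_congr rfl fun y _ => ?_
  rw [← log_div_log, ← inv_div (∑ y', p (x, y')), log_inv]
  ring

theorem condEntropy_eq_zero_of_subsingleton {𝒳 𝒴 : Type*} [Fintype 𝒳] [Fintype 𝒴]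
    [Subsingleton 𝒴] (p : 𝒳 × 𝒴 → ℝ) : condEntropy p = 0 := by
  refine sum_eq_zero fun x _ => sum_eq_zero fun y _ => ?_
  rw [Fintype.sum_subsingleton _ y]
  by_cases h : p (x, y) = 0 <;> simp [h]

theorem condEntropy_le_of_le_add {𝒳 𝒴 : Type*} [Fintype 𝒳] [Fintype 𝒴] {p q r : 𝒳 × 𝒴 → ℝ}
    (hp0 : ∀ w, 0 ≤ p w) (hq0 : ∀ w, 0 ≤ q w) (hr0 : ∀ w, 0 ≤ r w)
    (hpqr : ∀ w, p w ≤ q w + r w) :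
    condEntropy p ≤ condEntropy q +
      ∑ x, (∑ y, q (x, y)) * log ((∑ y, (q (x, y) + r (x, y))) / ∑ y, q (x, y)) +
      ∑ x, ∑ y, r (x, y) * log ((∑ y', (q (x, y') + r (x, y'))) / r (x, y)) := by
  set M : 𝒳 → ℝ := fun x => ∑ y, (q (x, y) + r (x, y))
  have hqrM : ∀ x y, q (x, y) + r (x, y) ≤ M x := fun x y =>
    single_le_sum (f := fun y => q (x, y) + r (x, y)) (fun y _ => add_nonneg (hq0 _) (hr0 _))
      (mem_univ y)
  have hQM : ∀ x, ∑ y, q (x, y) ≤ M x := fun x =>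
    sum_le_sum fun y _ => le_add_of_nonneg_right (hr0 _)
  calc condEntropy p
      ≤ ∑ x, ∑ y, p (x, y) * log (M x / (q (x, y) + r (x, y))) :=
        sum_le_sum fun x _ =>
          sum_mul_log_sum_div_le_of_le univ (fun y _ => hp0 _) fun y _ => hpqr _
    _ ≤ ∑ x, ∑ y, (q (x, y) * log (M x / q (x, y)) + r (x, y) * log (M x / r (x, y))) := by
        gcongr with x _ y _
        exact mul_log_div_add_le (hq0 _) (hr0 _) (hpqr _) (hqrM x y)
    _ = condEntropy q + ∑ x, (∑ y, q (x, y)) * log (M x / ∑ y, q (x, y)) +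
          ∑ x, ∑ y, r (x, y) * log (M x / r (x, y)) := by
        simp only [sum_add_distrib, condEntropy,
          sum_mul_log_div_eq_add univ (fun y _ => hq0 (_, y)) (hQM _)]

theorem condEntropy_sub_le {𝒳 𝒴 : Type*} [Fintype 𝒳] [Fintype 𝒴] (p q : 𝒳 × 𝒴 → ℝ)
    (hp0 : ∀ w, 0 ≤ p w) (hp1 : ∑ w, p w = 1) (hq0 : ∀ w, 0 ≤ q w) (hq1 : ∑ w, q w = 1)
    {θ : ℝ} (hθ : ∑ w, |p w - q w| = 2 * θ) :
    condEntropy p - condEntropy q ≤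
      log (1 + θ) + θ * log (Fintype.card 𝒴 * (1 + θ) / θ) := by
  set r : 𝒳 × 𝒴 → ℝ := fun w => (p w - q w)⁺
  set M : 𝒳 → ℝ := fun x => ∑ y, (q (x, y) + r (x, y))
  have hr0 : ∀ w, 0 ≤ r w := fun w => posPart_nonneg _
  have hpqr : ∀ w, p w ≤ q w + r w := fun w => by linarith [le_posPart (p w - q w)]
  have key : condEntropy p ≤ condEntropy q +
      ∑ x, (∑ y, q (x, y)) * log (M x / ∑ y, q (x, y)) +
      ∑ x, ∑ y, r (x, y) * log (M x / r (x, y)) :=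
    condEntropy_le_of_le_add hp0 hq0 hr0 hpqr
  have hr : ∑ w, r w = θ := by
    have h2r : ∀ w, 2 * r w = p w - q w + |p w - q w| := fun w => by
      linarith [posPart_sub_negPart (p w - q w), posPart_add_negPart (p w - q w)]
    have := sum_congr rfl fun w (_ : w ∈ univ) => h2r w
    rw [← mul_sum, sum_add_distrib, sum_sub_distrib, hp1, hq1, hθ] at this
    linarith
  have hM : ∑ x, M x = 1 + θ := by
    simp only [M]
    rw [← Fintype.sum_prod_type (fun w => q w + r w), sum_add_distrib, hq1, hr]
  have hM0 : ∀ x, 0 ≤ M x := fun x => sum_nonneg fun y _ => add_nonneg (hq0 _) (hr0 _)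
  have hrM : ∀ x y, r (x, y) ≤ M x := fun x y => (le_add_of_nonneg_left (hq0 _)).trans
    (single_le_sum (f := fun y => q (x, y) + r (x, y)) (fun y _ => add_nonneg (hq0 _) (hr0 _))
      (mem_univ y))
  have hmarginal : ∑ x, (∑ y, q (x, y)) * log (M x / ∑ y, q (x, y)) ≤ log (1 + θ) := by
    have hQ0 : ∀ x, 0 ≤ ∑ y, q (x, y) := fun x => sum_nonneg fun y _ => hq0 _
    have := sum_mul_log_div_le univ (u := fun x => ∑ y, q (x, y)) (c := M) (fun x _ => hQ0 x)
      (fun x _ => hM0 x) fun x _ h =>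
        le_antisymm (h ▸ sum_le_sum fun y _ => le_add_of_nonneg_right (hr0 _)) (hQ0 x)
    rwa [← Fintype.sum_prod_type q, hq1, hM, one_mul, div_one] at this
  have hexcess : ∑ x, ∑ y, r (x, y) * log (M x / r (x, y)) ≤
      θ * log (Fintype.card 𝒴 * (1 + θ) / θ) := by
    have := sum_mul_log_div_le univ (u := r) (c := fun w => M w.1) (fun w _ => hr0 w)
      (fun w _ => hM0 w.1) fun w _ h => le_antisymm (h ▸ hrM w.1 w.2) (hr0 w)
    have hMsum : ∑ w : 𝒳 × 𝒴, M w.1 = Fintype.card 𝒴 * (1 + θ) := by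
      rw [Fintype.sum_prod_type]
      simp only [sum_const, card_univ, nsmul_eq_mul, ← mul_sum, hM]
    rwa [hr, hMsum, Fintype.sum_prod_type] at this
  linarith

theorem log_one_add_add_mul_log_le {θ d : ℝ} (hθ : 0 < θ) (hθe : θ ≤ 1 / (2 * exp 1))
    (hd : 2 ≤ d) : log (1 + θ) + θ * log (d * (1 + θ) / θ) ≤ -5 * θ * log (4 * θ / d) := by
  have hθ1 : θ ≤ 1 :=
    hθe.trans ((div_le_one (by positivity)).mpr (by linarith [add_one_le_exp (1 : ℝ)]))
  have hlogθ : log θ ≤ -(log 2 + 1) :=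
    calc log θ ≤ log (1 / (2 * exp 1)) := log_le_log hθ hθe
      _ = -(log 2 + 1) := by rw [one_div, log_inv, log_mul two_ne_zero (exp_ne_zero 1), log_exp]
  have hlogd : log 2 ≤ log d := log_le_log two_pos hd
  have hlog1θ : log (1 + θ) ≤ θ := (log_le_sub_one_of_pos (by linarith)).trans_eq (by ring)
  have hlog2 : log 2 < 1 := log_two_lt_d9.trans (by norm_num)
  rw [log_div (by positivity) hθ.ne', log_mul (by positivity) (by positivity),
    log_div (by positivity) (by positivity), log_mul (by norm_num) hθ.ne',
    show (4 : ℝ) = 2 ^ 2 by norm_num, log_pow]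
  push_cast
  nlinarith [mul_le_mul_of_nonneg_left hlog1θ (by linarith : (0 : ℝ) ≤ 1 + θ),
    mul_le_mul_of_nonneg_left hlogθ hθ.le, mul_le_mul_of_nonneg_left hlogd hθ.le,
    mul_le_mul_of_nonneg_left hθ1 hθ.le, mul_le_mul_of_nonneg_left hlog2.le hθ.le]

/-- For joint pmfs `p, q` on finite `𝒳 × 𝒴` with
`Θ := ‖p − q‖_TV` satisfying `0 < Θ ≤ 1/(2e)`:
`|H_p(Y|X) − H_q(Y|X)| ≤ −5Θ·log₂(4Θ/|𝒴|)`. -/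
theorem stmt_2 {𝒳 𝒴 : Type*} [Fintype 𝒳] [Fintype 𝒴]
    (p q : 𝒳 × 𝒴 → ℝ)
    (hp0 : ∀ w, 0 ≤ p w) (hp1 : ∑ w, p w = 1)
    (hq0 : ∀ w, 0 ≤ q w) (hq1 : ∑ w, q w = 1)
    (Θ : ℝ) (hΘdef : Θ = (1 / 2) * ∑ w, |p w - q w|)
    (hΘpos : 0 < Θ) (hΘle : Θ ≤ 1 / (2 * Real.exp 1)) :
    |condEntropy2 p - condEntropy2 q| ≤
      -5 * Θ * Real.logb 2 (4 * Θ / (Fintype.card 𝒴 : ℝ)) := by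
  rcases le_or_gt (Fintype.card 𝒴) 1 with h𝒴 | h𝒴
  · have : Subsingleton 𝒴 := Fintype.card_le_one_iff_subsingleton.mp h𝒴
    have hΘ4 : 4 * Θ ≤ 1 := by
      have := hΘle.trans (div_le_div_of_nonneg_left zero_le_one (by norm_num : (0:ℝ) < 4)
        (by linarith [add_one_le_exp (1 : ℝ)]))
      linarith
    have hlog : logb 2 (4 * Θ / Fintype.card 𝒴) ≤ 0 := by
      refine logb_nonpos one_lt_two (by positivity) ?_
      rcases Nat.le_one_iff_eq_zero_or_eq_one.mp h𝒴 with h | h <;> simp [h, hΘ4]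
    simp only [condEntropy2_eq_condEntropy_div_log_two, condEntropy_eq_zero_of_subsingleton,
      sub_self, zero_div, abs_zero]
    nlinarith
  · have hd : (2 : ℝ) ≤ Fintype.card 𝒴 := by exact_mod_cast h𝒴
    have hpq : ∑ w, |p w - q w| = 2 * Θ := by rw [hΘdef]; ring
    have hqp : ∑ w, |q w - p w| = 2 * Θ := by simpa only [abs_sub_comm] using hpq
    have hbound := log_one_add_add_mul_log_le hΘpos hΘle hd
    rw [condEntropy2_eq_condEntropy_div_log_two, condEntropy2_eq_condEntropy_div_log_two,
      ← sub_div, abs_div, abs_of_pos (log_pos one_lt_two), ← log_div_log, ← mul_div_assoc]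
    gcongr
    exact abs_sub_le_iff.mpr ⟨(condEntropy_sub_le p q hp0 hp1 hq0 hq1 hpq).trans hbound,
      (condEntropy_sub_le q p hq0 hq1 hp0 hp1 hqp).trans hbound⟩
end

section
/- Under the random binning setup, fix bin indices b_{[1:T]} and for a tuple y^n_{[1:T]} let I(y^n_{[1:T]}) := ∏_{i=1}^T 1(𝓑_i(y_i^n)=b_i). For every nonempty S ⊆ [1:T] and every pair (y^n_{[1:T]}, ỹ^n_{[1:T]}) ∈ 𝒦_S: Cov(I(y^n_{[1:T]}), I(ỹ^n_{[1:T]})) ≤ p^U_S · (p^U_{S^c})². -/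
open Finset

/-- Expectation over the uniformly random binning collection
`𝔅 = (𝓑_1, …, 𝓑_T)`, `𝓑_i : 𝒴_i^n → [1:M_i]`. -/
noncomputable def binExp {T n : ℕ} (Y : Fin T → Type*) [∀ i, Fintype (Y i)]
    [∀ i, DecidableEq (Y i)] (M : Fin T → ℕ)
    (f : (∀ i, (Fin n → Y i) → Fin (M i)) → ℝ) : ℝ :=
  (∑ B : ∀ i, (Fin n → Y i) → Fin (M i), f B) /
    (Fintype.card (∀ i, (Fin n → Y i) → Fin (M i)) : ℝ)

/-- The indicator `I(y^n_{[1:T]}) = ∏_{i=1}^T 1(𝓑_i(y_i^n) = b_i)`. -/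
def binInd {T n : ℕ} {Y : Fin T → Type*} {M : Fin T → ℕ}
    (b : ∀ i, Fin (M i)) (y : ∀ i, Fin n → Y i)
    (B : ∀ i, (Fin n → Y i) → Fin (M i)) : ℝ :=
  ∏ i, (if B i (y i) = b i then (1 : ℝ) else 0)


/-- Count of functions `D → Fin m` that equal `c` on all of `s`. -/
lemma card_fix (D : Type*) [Fintype D] [DecidableEq D] {m : ℕ} (s : Finset D) (c : Fin m) :
    Fintype.card {Bi : D → Fin m // ∀ a ∈ s, Bi a = c}
      = m ^ (Fintype.card D - s.card) := by
  have e : {Bi : D → Fin m // ∀ a ∈ s, Bi a = c} ≃ ({x : D // x ∉ s} → Fin m) :=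
    { toFun := fun Bi x => Bi.1 x.1
      invFun := fun g => ⟨fun x => if h : x ∈ s then c else g ⟨x, h⟩,
        fun a ha => by simp [ha]⟩
      left_inv := by
        rintro ⟨Bi, hBi⟩
        ext x
        by_cases h : x ∈ s
        · simp [h, hBi x h]
        · simp [h]
      right_inv := by
        intro g
        ext x
        simp [x.2] }
  rw [Fintype.card_congr e, Fintype.card_fun, Fintype.card_fin]
  congr 1
  have := Fintype.card_subtype_compl (fun x : D => x ∈ s)
  simpa [Fintype.card_subtype] using this

lemma avg_ind (D : Type*) [Fintype D] [DecidableEq D] {m : ℕ} (hm : 0 < m)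
    (s : Finset D) (c : Fin m) :
    (∑ Bi : D → Fin m, ∏ a ∈ s, (if Bi a = c then (1 : ℝ) else 0))
      / (Fintype.card (D → Fin m) : ℝ) = 1 / (m : ℝ) ^ s.card := by
  have h1 : (∑ Bi : D → Fin m, ∏ a ∈ s, (if Bi a = c then (1 : ℝ) else 0))
      = ((univ.filter (fun Bi : D → Fin m => ∀ a ∈ s, Bi a = c)).card : ℝ) := by
    rw [← Finset.sum_boole]
    refine Finset.sum_congr rfl fun Bi _ => ?_
    rw [Finset.prod_boole]
    simp
  rw [h1]
  have h2 : (univ.filter (fun Bi : D → Fin m => ∀ a ∈ s, Bi a = c)).card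
      = m ^ (Fintype.card D - s.card) := by
    rw [← Fintype.card_subtype, card_fix]
  have hsc : s.card ≤ Fintype.card D := s.card_le_univ.trans_eq (by simp)
  rw [h2, Fintype.card_fun, Fintype.card_fin]
  have hmR : (0 : ℝ) < m := by exact_mod_cast hm
  rw [div_eq_div_iff (by positivity) (by positivity)]
  push_cast
  rw [one_mul, ← pow_add, Nat.sub_add_cancel hsc]

/-- For every nonempty `S ⊆ [1:T]` and every pair `(y, ỹ) ∈ 𝒦_S`
(`y_i^n = ỹ_i^n` for `i ∈ S`, `y_i^n ≠ ỹ_i^n` for `i ∉ S`):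
`Cov(I(y), I(ỹ)) ≤ p^U_S · (p^U_{S^c})²` where `p^U_S = ∏_{i∈S} 1/M_i`. -/
theorem stmt_6 {T n : ℕ} (Y : Fin T → Type*) [∀ i, Fintype (Y i)] [∀ i, DecidableEq (Y i)]
    (R : Fin T → ℝ) (hR : ∀ i, 0 ≤ R i)
    (M : Fin T → ℕ) (hM : ∀ i, (M i : ℝ) = 2 ^ ((n : ℝ) * R i))
    (b : ∀ i, Fin (M i)) (y yt : ∀ i, Fin n → Y i)
    (S : Finset (Fin T)) (hS : S.Nonempty)
    (hin : ∀ i ∈ S, y i = yt i) (hout : ∀ i ∉ S, y i ≠ yt i) :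
    binExp Y M (fun B => binInd b y B * binInd b yt B) -
        binExp Y M (binInd b y) * binExp Y M (binInd b yt) ≤
      (∏ i ∈ S, (1 / (M i : ℝ))) * (∏ i ∈ Sᶜ, (1 / (M i : ℝ))) ^ 2 := by
  have hMpos : ∀ i, 0 < M i := fun i => (b i).pos
  -- nonnegativity of the subtracted term
  have hind_nonneg : ∀ (z : ∀ i, Fin n → Y i) (B : ∀ i, (Fin n → Y i) → Fin (M i)), 0 ≤ binInd b z B := by
    intro z B
    exact Finset.prod_nonneg fun i _ => by positivity
  have hexp_nonneg : ∀ z : ∀ i, Fin n → Y i, 0 ≤ binExp Y M (binInd b z) := by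
    intro z
    apply div_nonneg (Finset.sum_nonneg fun B _ => hind_nonneg z B) (by positivity)
  -- compute the first expectation exactly
  have key : binExp Y M (fun B => binInd b y B * binInd b yt B)
      = (∏ i ∈ S, (1 / (M i : ℝ))) * (∏ i ∈ Sᶜ, (1 / (M i : ℝ))) ^ 2 := by
    have hfact : binExp Y M (fun B => binInd b y B * binInd b yt B)
        = ∏ i, ((∑ Bi : (Fin n → Y i) → Fin (M i),
            ∏ a ∈ ({y i, yt i} : Finset (Fin n → Y i)), (if Bi a = b i then (1:ℝ) else 0))
            / (Fintype.card ((Fin n → Y i) → Fin (M i)) : ℝ)) := by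
      unfold binExp binInd
      rw [Finset.prod_div_distrib]
      congr 1
      · refine Eq.trans (Finset.sum_congr rfl fun B _ => ?_) (Fintype.prod_sum _).symm
        show _ = ∏ i, ∏ a ∈ ({y i, yt i} : Finset (Fin n → Y i)), (if B i a = b i then (1:ℝ) else 0)
        beta_reduce
        rw [← Finset.prod_mul_distrib]
        refine Finset.prod_congr rfl fun i _ => ?_
        by_cases h : y i = yt i
        · rw [h]
          have hpair : ({yt i, yt i} : Finset (Fin n → Y i)) = {yt i} := by simp
          rw [hpair, Finset.prod_singleton]
          split <;> norm_num
        · rw [Finset.prod_insert (by simpa using h), Finset.prod_singleton]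
      · rw [Fintype.card_pi]
        push_cast
        rfl
    rw [hfact]
    rw [← Finset.prod_compl_mul_prod S, mul_comm]
    congr 1
    · refine Finset.prod_congr rfl fun i hi => ?_
      rw [avg_ind _ (hMpos i) _ (b i),
        show ({y i, yt i} : Finset (Fin n → Y i)).card = 1 by simp [hin i hi], pow_one]
    · rw [← Finset.prod_pow]
      refine Finset.prod_congr rfl fun i hi => ?_
      rw [avg_ind _ (hMpos i) _ (b i),
        Finset.card_pair (hout i (Finset.mem_compl.mp hi)), one_div_pow]
  rw [key]
  have := mul_nonneg (hexp_nonneg y) (hexp_nonneg yt)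
  linarith
end

section
/- Under the random binning setup, for every x^n with type π_X̄, every conditional n-type π_{Y_{[1:T]}|X̄}, and every tuple of bin indices b_{[1:T]}: Var(N_π(x^n, b_{[1:T]})) ≤ ∑_{∅ ≠ S ⊆ [1:T]} ∑_{(y^n_{[1:T]}, ỹ^n_{[1:T]}) ∈ 𝒦_S} 1(y^n_{[1:T]} ∈ 𝒯^n_{π_{Y_{[1:T]}|X̄}}(x^n) and ỹ^n_{[1:T]} ∈ 𝒯^n_{π_{Y_{[1:T]}|X̄}}(x^n)) · p^U_S · (p^U_{S^c})². -/
/-!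
Write `N = ∑_{y ∈ 𝒯} 1{𝓑(y) = b}`, so that
`Var N = ∑_{y, ỹ ∈ 𝒯} (P(𝓑(y) = 𝓑(ỹ) = b) - P(𝓑(y) = b) P(𝓑(ỹ) = b))`.
The bin functions of different coordinates are independent, and a uniformly random function
takes the value `b_i` at one point with probability `1/M_i` and at two distinct points with
probability `1/M_i²`. Hence, if `S` is the set of coordinates on which `y` and `ỹ` agree, the joint
probability is `p^U_S (p^U_{Sᶜ})²`. For `S = ∅` this is the product of the marginals, so the
covariance vanishes; for `S ≠ ∅` it is bounded by dropping the subtracted square.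
-/

open Finset

attribute [local instance] Classical.propDecidable

/-- The conditional type class `𝒯^n_{π_{Y_{[1:T]}|X̄}}(x^n)`: the set of tuples of sequences
`y = (y_1^n, …, y_T^n)` such that the joint empirical distribution of `(y, x^n)` equals `π`. -/
noncomputable def condTypeClass {T n : ℕ} (Y : Fin T → Type*) [∀ i, Fintype (Y i)]
    {𝒳 : Type*} [Fintype 𝒳] (x : Fin n → 𝒳) (π : (∀ i, Y i) × 𝒳 → ℝ) :
    Finset (∀ i, Fin n → Y i) :=
  Finset.univ.filter (fun y => ∀ (ys : ∀ i, Y i) (a : 𝒳),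
    π (ys, a) =
      ((Finset.univ.filter (fun t : Fin n => (fun i => y i t) = ys ∧ x t = a)).card : ℝ) / n)

/-- `N_π(x^n, b) = #{y ∈ 𝒯^n_{π_{Y|X̄}}(x^n) : 𝓑_i(y_i^n) = b_i ∀i}` as a function of the
binning `B`. -/
noncomputable def Nbin {T n : ℕ} (Y : Fin T → Type*) [∀ i, Fintype (Y i)]
    {𝒳 : Type*} [Fintype 𝒳] (x : Fin n → 𝒳) (π : (∀ i, Y i) × 𝒳 → ℝ)
    {M : Fin T → ℕ} (b : ∀ i, Fin (M i))
    (B : ∀ i, (Fin n → Y i) → Fin (M i)) : ℝ :=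
  (((condTypeClass Y x π).filter (fun y => ∀ i, B i (y i) = b i)).card : ℝ)

noncomputable def uniformProb (α : Type*) [Fintype α] (P : α → Prop) : ℝ :=
  (#{x | P x} : ℝ) / Fintype.card α

lemma uniformProb_pi {ι : Type*} [Fintype ι] [DecidableEq ι] {F : ι → Type*}
    [∀ i, Fintype (F i)] (P : ∀ i, F i → Prop) :
    uniformProb (∀ i, F i) (fun B => ∀ i, P i (B i)) = ∏ i, uniformProb (F i) (P i) := by
  have hfilter : ({B | ∀ i, P i (B i)} : Finset (∀ i, F i)) =
      Fintype.piFinset fun i => {f | P i f} := by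
    ext B; simp
  simp only [uniformProb, hfilter, Fintype.card_piFinset, Fintype.card_pi, Nat.cast_prod,
    prod_div_distrib]

section UniformFunction

variable {A β : Type*} [Fintype A] [DecidableEq A] [Fintype β] [Nonempty β]

lemma uniformProb_forall_mem_eq (s : Finset A) (g : A → β) :
    uniformProb (A → β) (fun f => ∀ a ∈ s, f a = g a) = (1 / (Fintype.card β : ℝ)) ^ #s := by
  have hcoord : ∀ a, uniformProb β (fun v => a ∈ s → v = g a) =
      if a ∈ s then 1 / (Fintype.card β : ℝ) else 1 := by
    intro a
    by_cases ha : a ∈ s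
    · have hsingle : ({v | v = g a} : Finset β) = {g a} := by ext; simp
      simp [uniformProb, ha, hsingle]
    · simp [uniformProb, ha]
  rw [uniformProb_pi (fun a v => a ∈ s → v = g a), Fintype.prod_congr _ _ hcoord,
    Fintype.prod_ite_mem, prod_const]

lemma uniformProb_apply_eq (a : A) (c : β) :
    uniformProb (A → β) (fun f => f a = c) = 1 / (Fintype.card β : ℝ) := by
  simpa using uniformProb_forall_mem_eq {a} fun _ => c

lemma uniformProb_apply_eq_and_apply_eq (a a' : A) (c : β) :
    uniformProb (A → β) (fun f => f a = c ∧ f a' = c) =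
      if a = a' then 1 / (Fintype.card β : ℝ) else (1 / (Fintype.card β : ℝ)) ^ 2 := by
  split_ifs with h
  · subst h
    simpa using uniformProb_forall_mem_eq {a} fun _ => c
  · simpa [Finset.card_pair h] using uniformProb_forall_mem_eq {a, a'} fun _ => c

end UniformFunction

section Binning

variable {T n : ℕ} {Y : Fin T → Type*} {M : Fin T → ℕ}

/-- `N_π(x^n, b)` with the type class replaced by an arbitrary set `𝒯` of tuples of sequences;
`Nbin Y x π b` is definitionally `binCount (condTypeClass Y x π) b`. -/
noncomputable def binCount (𝒯 : Finset (∀ i, Fin n → Y i)) (b : ∀ i, Fin (M i))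
    (B : ∀ i, (Fin n → Y i) → Fin (M i)) : ℝ :=
  #{y ∈ 𝒯 | ∀ i, B i (y i) = b i}

lemma binCount_eq_sum (𝒯 : Finset (∀ i, Fin n → Y i)) (b : ∀ i, Fin (M i))
    (B : ∀ i, (Fin n → Y i) → Fin (M i)) :
    binCount 𝒯 b B = ∑ y ∈ 𝒯, if ∀ i, B i (y i) = b i then 1 else 0 := by
  simp only [binCount, sum_boole]

lemma binCount_sq_eq_sum (𝒯 : Finset (∀ i, Fin n → Y i)) (b : ∀ i, Fin (M i))
    (B : ∀ i, (Fin n → Y i) → Fin (M i)) :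
    binCount 𝒯 b B ^ 2 =
      ∑ y ∈ 𝒯, ∑ yt ∈ 𝒯, if ∀ i, B i (y i) = b i ∧ B i (yt i) = b i then 1 else 0 := by
  simp only [sq, binCount_eq_sum, sum_mul_sum, forall_and, ite_zero_mul_ite_zero, mul_one]

variable [∀ i, Fintype (Y i)] [∀ i, DecidableEq (Y i)]

lemma binExp_sum {κ : Type*} (s : Finset κ) (f : κ → (∀ i, (Fin n → Y i) → Fin (M i)) → ℝ) :
    binExp Y M (fun B => ∑ j ∈ s, f j B) = ∑ j ∈ s, binExp Y M (f j) := by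
  simp only [binExp, sum_div]
  exact sum_comm

lemma binExp_ite (P : (∀ i, (Fin n → Y i) → Fin (M i)) → Prop) [DecidablePred P] :
    binExp Y M (fun B => if P B then 1 else 0) = uniformProb _ P := by
  simp only [binExp, uniformProb, sum_boole]
  congr

lemma binExp_binCount (𝒯 : Finset (∀ i, Fin n → Y i)) (b : ∀ i, Fin (M i)) :
    binExp Y M (binCount 𝒯 b) = #𝒯 * ∏ i, 1 / (M i : ℝ) := by
  have : ∀ i, Nonempty (Fin (M i)) := fun i => ⟨b i⟩
  have hy : ∀ y : ∀ i, Fin n → Y i,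
      uniformProb _ (fun B : ∀ i, (Fin n → Y i) → Fin (M i) => ∀ i, B i (y i) = b i) =
        ∏ i, 1 / (M i : ℝ) := by
    intro y
    rw [uniformProb_pi (F := fun i => (Fin n → Y i) → Fin (M i)) fun i f => f (y i) = b i]
    simp [uniformProb_apply_eq]
  simp only [funext (binCount_eq_sum 𝒯 b), binExp_sum, binExp_ite, hy, sum_const, nsmul_eq_mul]

lemma binExp_binCount_sq (𝒯 : Finset (∀ i, Fin n → Y i)) (b : ∀ i, Fin (M i)) :
    binExp Y M (fun B => binCount 𝒯 b B ^ 2) =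
      ∑ y ∈ 𝒯, ∑ yt ∈ 𝒯, ∏ i, if y i = yt i then 1 / (M i : ℝ) else (1 / (M i : ℝ)) ^ 2 := by
  have : ∀ i, Nonempty (Fin (M i)) := fun i => ⟨b i⟩
  have hpair : ∀ y yt : ∀ i, Fin n → Y i,
      uniformProb _ (fun B : ∀ i, (Fin n → Y i) → Fin (M i) =>
          ∀ i, B i (y i) = b i ∧ B i (yt i) = b i) =
        ∏ i, if y i = yt i then 1 / (M i : ℝ) else (1 / (M i : ℝ)) ^ 2 := by
    intro y yt
    rw [uniformProb_pi (F := fun i => (Fin n → Y i) → Fin (M i))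
      fun i f => f (y i) = b i ∧ f (yt i) = b i]
    simp [uniformProb_apply_eq_and_apply_eq]
  simp only [binCount_sq_eq_sum, binExp_sum, binExp_ite, hpair]

end Binning

section Collision

variable {ι : Type*} [Fintype ι] [DecidableEq ι] {A : ι → Type*} [∀ i, DecidableEq (A i)]

def agreeSet (y yt : ∀ i, A i) : Finset ι := {i | y i = yt i}

lemma prod_ite_eq_mul_sq (p : ι → ℝ) (y yt : ∀ i, A i) :
    ∏ i, (if y i = yt i then p i else p i ^ 2) =
      (∏ i ∈ agreeSet y yt, p i) * (∏ i ∈ (agreeSet y yt)ᶜ, p i) ^ 2 := by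
  rw [agreeSet, compl_filter, prod_ite, prod_pow]

lemma forall_mem_eq_and_forall_notMem_ne_iff (S : Finset ι) (y yt : ∀ i, A i) :
    ((∀ i ∈ S, y i = yt i) ∧ ∀ i ∉ S, y i ≠ yt i) ↔ S = agreeSet y yt := by
  constructor
  · rintro ⟨hS, hSc⟩
    ext i
    by_cases hi : i ∈ S
    · simp [agreeSet, hi, hS i hi]
    · simp [agreeSet, hi, hSc i hi]
  · rintro rfl
    simp [agreeSet]

lemma prod_ite_eq_sub_sq_le (p : ι → ℝ) (y yt : ∀ i, A i) :
    ∏ i, (if y i = yt i then p i else p i ^ 2) - (∏ i, p i) ^ 2 ≤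
      ∑ S ∈ univ.powerset.filter (fun S : Finset ι => S.Nonempty),
        if (∀ i ∈ S, y i = yt i) ∧ (∀ i ∉ S, y i ≠ yt i) then
          (∏ i ∈ S, p i) * (∏ i ∈ Sᶜ, p i) ^ 2 else 0 := by
  simp only [forall_mem_eq_and_forall_notMem_ne_iff, sum_ite_eq', mem_filter, mem_powerset,
    subset_univ, true_and, prod_ite_eq_mul_sq]
  split_ifs with hE
  · exact sub_le_self _ (sq_nonneg _)
  · rw [not_nonempty_iff_eq_empty.mp hE]
    simp

end Collision

theorem binExp_binCount_sq_sub_sq_le {T n : ℕ} {Y : Fin T → Type*} [∀ i, Fintype (Y i)]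
    [∀ i, DecidableEq (Y i)] {M : Fin T → ℕ} (𝒯 : Finset (∀ i, Fin n → Y i))
    (b : ∀ i, Fin (M i)) :
    binExp Y M (fun B => binCount 𝒯 b B ^ 2) - binExp Y M (binCount 𝒯 b) ^ 2 ≤
      ∑ S ∈ Finset.univ.powerset.filter (fun S : Finset (Fin T) => S.Nonempty),
        ∑ y : ∀ i, Fin n → Y i, ∑ yt : ∀ i, Fin n → Y i,
          (if (∀ i ∈ S, y i = yt i) ∧ (∀ i ∉ S, y i ≠ yt i) ∧ y ∈ 𝒯 ∧ yt ∈ 𝒯 then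
            (∏ i ∈ S, (1 / (M i : ℝ))) * (∏ i ∈ Sᶜ, (1 / (M i : ℝ))) ^ 2
          else 0) := by
  set p : Fin T → ℝ := fun i => 1 / (M i : ℝ)
  have hvar : binExp Y M (fun B => binCount 𝒯 b B ^ 2) - binExp Y M (binCount 𝒯 b) ^ 2 =
      ∑ y ∈ 𝒯, ∑ yt ∈ 𝒯, (∏ i, (if y i = yt i then p i else p i ^ 2) - (∏ i, p i) ^ 2) := by
    simp only [binExp_binCount_sq, binExp_binCount, sum_sub_distrib, sum_const, nsmul_eq_mul, p]
    ring
  rw [hvar]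
  calc ∑ y ∈ 𝒯, ∑ yt ∈ 𝒯, (∏ i, (if y i = yt i then p i else p i ^ 2) - (∏ i, p i) ^ 2)
      ≤ ∑ y ∈ 𝒯, ∑ yt ∈ 𝒯, ∑ S ∈ univ.powerset.filter (fun S : Finset (Fin T) => S.Nonempty),
          (if (∀ i ∈ S, y i = yt i) ∧ (∀ i ∉ S, y i ≠ yt i) ∧ y ∈ 𝒯 ∧ yt ∈ 𝒯 then
            (∏ i ∈ S, p i) * (∏ i ∈ Sᶜ, p i) ^ 2 else 0) := by
        gcongr with y hy yt hyt
        simp only [hy, hyt, and_true]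
        -- the two sides differ only in the `Decidable` instances of their `if`s
        exact (prod_ite_eq_sub_sq_le p y yt).trans_eq (sum_congr rfl fun S _ => by congr)
    _ = ∑ y, ∑ yt, ∑ S ∈ univ.powerset.filter (fun S : Finset (Fin T) => S.Nonempty),
          (if (∀ i ∈ S, y i = yt i) ∧ (∀ i ∉ S, y i ≠ yt i) ∧ y ∈ 𝒯 ∧ yt ∈ 𝒯 then
            (∏ i ∈ S, p i) * (∏ i ∈ Sᶜ, p i) ^ 2 else 0) := by
        refine (sum_subset (subset_univ _) fun y _ hy => ?_).trans
          (sum_congr rfl fun y _ => sum_subset (subset_univ _) fun yt _ hyt => ?_)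
        · simp [hy]
        · simp [hyt]
    _ = _ := (sum_comm.trans (sum_congr rfl fun y _ => sum_comm)).symm

theorem stmt_7_general {T n : ℕ} (Y : Fin T → Type*) [∀ i, Fintype (Y i)] [∀ i, DecidableEq (Y i)]
    {𝒳 : Type*} [Fintype 𝒳]
    (M : Fin T → ℕ)
    (x : Fin n → 𝒳) (π : (∀ i, Y i) × 𝒳 → ℝ)
    (b : ∀ i, Fin (M i)) :
    binExp Y M (fun B => (Nbin Y x π b B) ^ 2) -
        (binExp Y M (Nbin Y x π b)) ^ 2 ≤
      ∑ S ∈ Finset.univ.powerset.filter (fun S : Finset (Fin T) => S.Nonempty),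
        ∑ y : ∀ i, Fin n → Y i, ∑ yt : ∀ i, Fin n → Y i,
          (if (∀ i ∈ S, y i = yt i) ∧ (∀ i ∉ S, y i ≠ yt i) ∧
              y ∈ condTypeClass Y x π ∧ yt ∈ condTypeClass Y x π then
            (∏ i ∈ S, (1 / (M i : ℝ))) * (∏ i ∈ Sᶜ, (1 / (M i : ℝ))) ^ 2
          else 0) :=
  binExp_binCount_sq_sub_sq_le (condTypeClass Y x π) b

/-- Variance bound on the number of type-class members landing in a
given bin tuple:
`Var(N_π) ≤ ∑_{∅≠S⊆[1:T]} ∑_{(y,ỹ)∈𝒦_S} 1(y,ỹ ∈ 𝒯^n_π(x^n)) · p^U_S (p^U_{S^c})²`. -/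
theorem stmt_7 {T n : ℕ} (Y : Fin T → Type*) [∀ i, Fintype (Y i)] [∀ i, DecidableEq (Y i)]
    {𝒳 : Type*} [Fintype 𝒳]
    (R : Fin T → ℝ) (hR : ∀ i, 0 ≤ R i)
    (M : Fin T → ℕ) (hM : ∀ i, (M i : ℝ) = 2 ^ ((n : ℝ) * R i))
    (x : Fin n → 𝒳) (π : (∀ i, Y i) × 𝒳 → ℝ)
    (hπ0 : ∀ w, 0 ≤ π w) (hπ1 : ∑ w, π w = 1)
    (hπtype : ∀ w, ∃ k : ℕ, k ≤ n ∧ π w = (k : ℝ) / n)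
    (hπmarg : ∀ a : 𝒳, ∑ ys : ∀ i, Y i, π (ys, a) =
      ((Finset.univ.filter (fun t : Fin n => x t = a)).card : ℝ) / n)
    (b : ∀ i, Fin (M i)) :
    binExp Y M (fun B => (Nbin Y x π b B) ^ 2) -
        (binExp Y M (Nbin Y x π b)) ^ 2 ≤
      ∑ S ∈ Finset.univ.powerset.filter (fun S : Finset (Fin T) => S.Nonempty),
        ∑ y : ∀ i, Fin n → Y i, ∑ yt : ∀ i, Fin n → Y i,
          (if (∀ i ∈ S, y i = yt i) ∧ (∀ i ∉ S, y i ≠ yt i) ∧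
              y ∈ condTypeClass Y x π ∧ yt ∈ condTypeClass Y x π then
            (∏ i ∈ S, (1 / (M i : ℝ))) * (∏ i ∈ Sᶜ, (1 / (M i : ℝ))) ^ 2
          else 0) :=
  stmt_7_general Y M x π b
end

section
/- Under the random binning setup, for every x^n in the support of p with type π_X̄, every conditional n-type π_{Y_{[1:T]}|X̄}, and every tuple of bin indices b_{[1:T]}: E_𝔅| Z_π(x^n, b_{[1:T]}) − E_𝔅[Z_π(x^n, b_{[1:T]})] | ≤ l_π(x^n) · sqrt( ∑_{∅ ≠ S ⊆ [1:T]} (1/p^U_S) · ∑_{(y^n_{[1:T]}, ỹ^n_{[1:T]}) ∈ 𝒦_S} 1(y^n_{[1:T]} ∈ 𝒯^n_{π_{Y_{[1:T]}|X̄}}(x^n) and ỹ^n_{[1:T]} ∈ 𝒯^n_{π_{Y_{[1:T]}|X̄}}(x^n)) ). -/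
open Finset

attribute [local instance] Classical.propDecidable

/-- `Z_π(x^n, b) = N_π(x^n, b) · l_π(x^n) / p^U_{[1:T]}` as a function of the binning. -/
noncomputable def Zbin {T n : ℕ} (Y : Fin T → Type*) [∀ i, Fintype (Y i)]
    {𝒳 : Type*} [Fintype 𝒳] (x : Fin n → 𝒳) (π : (∀ i, Y i) × 𝒳 → ℝ) (l : ℝ)
    {M : Fin T → ℕ} (b : ∀ i, Fin (M i))
    (B : ∀ i, (Fin n → Y i) → Fin (M i)) : ℝ :=
  Nbin Y x π b B * l / ∏ i, (1 / (M i : ℝ))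

private lemma stmt9_forall_prod {T : ℕ} (P : Fin T → Prop) [∀ i, Decidable (P i)]
    [Decidable (∀ i, P i)] :
    (if ∀ i, P i then (1:ℝ) else 0) = ∏ i, if P i then (1:ℝ) else 0 := by
  by_cases h : ∀ i, P i
  · rw [if_pos h, eq_comm, Finset.prod_eq_one]
    exact fun i _ => if_pos (h i)
  · rw [if_neg h, eq_comm]
    push_neg at h
    obtain ⟨i, hi⟩ := h
    exact Finset.prod_eq_zero (Finset.mem_univ i) (if_neg hi)

private lemma stmt9_ite_mul (P Q : Prop) [Decidable P] [Decidable Q] [Decidable (P ∧ Q)] :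
    (if P then (1:ℝ) else 0) * (if Q then (1:ℝ) else 0) = if P ∧ Q then (1:ℝ) else 0 := by
  by_cases hP : P <;> by_cases hQ : Q <;> simp [hP, hQ]

private lemma stmt9_count1 {α β : Type*} [Fintype α] [Fintype β] [DecidableEq α]
    [DecidableEq β] (u : α) (c : β) :
    ∑ f : α → β, (if f u = c then (1:ℝ) else 0)
      = (Fintype.card (α → β) : ℝ) / (Fintype.card β : ℝ) := by
  classical
  have hb0 : (0:ℝ) < (Fintype.card β : ℝ) := by
    exact_mod_cast Fintype.card_pos_iff.2 ⟨c⟩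
  have hcard : (Fintype.card (α → β) : ℝ)
      = (Fintype.card β : ℝ) * (Fintype.card ({j // j ≠ u} → β) : ℝ) := by
    rw [Fintype.card_congr (Equiv.funSplitAt u β), Fintype.card_prod]
    push_cast; ring
  have key : ∑ f : α → β, (if f u = c then (1:ℝ) else 0)
      = (Fintype.card ({j // j ≠ u} → β) : ℝ) := by
    rw [← Equiv.sum_comp (Equiv.funSplitAt u β).symm
      (fun f : α → β => if f u = c then (1:ℝ) else 0)]
    have heval : ∀ q : β × ({j // j ≠ u} → β), (Equiv.funSplitAt u β).symm q u = q.1 := by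
      intro q; simp [Equiv.funSplitAt, Equiv.piSplitAt]
    simp only [heval]
    rw [Fintype.sum_prod_type]
    have h2 : ∀ a : β, (∑ _h : {j // j ≠ u} → β, (if a = c then (1:ℝ) else 0))
        = if a = c then (Fintype.card ({j // j ≠ u} → β) : ℝ) else 0 := by
      intro a; rw [Finset.sum_const, Finset.card_univ, nsmul_eq_mul]
      by_cases h : a = c <;> simp [h]
    simp only [h2]
    simp
  rw [key, hcard]
  field_simp

private lemma stmt9_count2 {α β : Type*} [Fintype α] [Fintype β] [DecidableEq α]
    [DecidableEq β] (u v : α) (hvu : v ≠ u) (c : β) :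
    ∑ f : α → β, (if f u = c ∧ f v = c then (1:ℝ) else 0)
      = (Fintype.card (α → β) : ℝ) / ((Fintype.card β : ℝ) * (Fintype.card β : ℝ)) := by
  classical
  have hb0 : (0:ℝ) < (Fintype.card β : ℝ) := by
    exact_mod_cast Fintype.card_pos_iff.2 ⟨c⟩
  have hcard : (Fintype.card (α → β) : ℝ)
      = (Fintype.card β : ℝ) * (Fintype.card ({j // j ≠ u} → β) : ℝ) := by
    rw [Fintype.card_congr (Equiv.funSplitAt u β), Fintype.card_prod]
    push_cast; ring
  rw [← Equiv.sum_comp (Equiv.funSplitAt u β).symm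
    (fun f : α → β => if f u = c ∧ f v = c then (1:ℝ) else 0)]
  have hevalu : ∀ q : β × ({j // j ≠ u} → β), (Equiv.funSplitAt u β).symm q u = q.1 := by
    intro q; simp [Equiv.funSplitAt, Equiv.piSplitAt]
  have hevalv : ∀ q : β × ({j // j ≠ u} → β), (Equiv.funSplitAt u β).symm q v = q.2 ⟨v, hvu⟩ := by
    intro q; simp [Equiv.funSplitAt, Equiv.piSplitAt, hvu]
  simp only [hevalu, hevalv]
  rw [Fintype.sum_prod_type]
  have h2 : ∀ a : β, (∑ h : {j // j ≠ u} → β, (if a = c ∧ h ⟨v, hvu⟩ = c then (1:ℝ) else 0))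
      = (if a = c then (1:ℝ) else 0) * ∑ h : {j // j ≠ u} → β, (if h ⟨v, hvu⟩ = c then (1:ℝ) else 0) := by
    intro a
    rw [Finset.mul_sum]
    exact Finset.sum_congr rfl fun h _ => (stmt9_ite_mul _ _).symm
  simp only [h2]
  rw [← Finset.sum_mul]
  have h3 : ∑ a : β, (if a = c then (1:ℝ) else 0) = 1 := by simp
  rw [h3, one_mul, stmt9_count1 (⟨v, hvu⟩ : {j // j ≠ u}) c, hcard]
  field_simp

private lemma stmt9_sum_pi_prod {T : ℕ} (F : Fin T → Type*) [∀ i, Fintype (F i)]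
    (g : ∀ i, F i → ℝ) :
    ∑ B : ∀ i, F i, ∏ i, g i (B i) = ∏ i, ∑ f : F i, g i f := by
  classical
  rw [Finset.prod_univ_sum, Fintype.piFinset_univ]

private lemma stmt9_binCount1 {T : ℕ} (G : Fin T → Type*) [∀ i, Fintype (G i)]
    [∀ i, DecidableEq (G i)] (M : Fin T → ℕ) (b : ∀ i, Fin (M i)) (y : ∀ i, G i) :
    ∑ B : ∀ i, G i → Fin (M i), (if ∀ i, B i (y i) = b i then (1:ℝ) else 0)
      = (Fintype.card (∀ i, G i → Fin (M i)) : ℝ) * ∏ i, (1 / (M i : ℝ)) := by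
  classical
  simp only [fun B : ∀ i, G i → Fin (M i) => stmt9_forall_prod (fun i => B i (y i) = b i)]
  rw [show (∑ B : ∀ i, G i → Fin (M i), ∏ i, if B i (y i) = b i then (1:ℝ) else 0)
      = ∏ i, ∑ f : G i → Fin (M i), (if f (y i) = b i then (1:ℝ) else 0) from
    stmt9_sum_pi_prod (fun i => G i → Fin (M i))
      (fun i f => if f (y i) = b i then (1:ℝ) else 0)]
  have h2 : ∀ i, (∑ f : G i → Fin (M i), (if f (y i) = b i then (1:ℝ) else 0))
      = (Fintype.card (G i → Fin (M i)) : ℝ) * (1 / (M i : ℝ)) := by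
    intro i
    rw [stmt9_count1 (y i) (b i), Fintype.card_fin]
    ring
  simp only [h2]
  rw [Finset.prod_mul_distrib, ← Nat.cast_prod, ← Fintype.card_pi]

private lemma stmt9_binCount2 {T : ℕ} (G : Fin T → Type*) [∀ i, Fintype (G i)]
    [∀ i, DecidableEq (G i)] (M : Fin T → ℕ) (b : ∀ i, Fin (M i)) (y z : ∀ i, G i) :
    ∑ B : ∀ i, G i → Fin (M i),
        (if ∀ i, B i (y i) = b i then (1:ℝ) else 0) * (if ∀ i, B i (z i) = b i then (1:ℝ) else 0)
      = (Fintype.card (∀ i, G i → Fin (M i)) : ℝ) *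
          ∏ i, (if y i = z i then 1 / (M i : ℝ) else (1 / (M i : ℝ)) * (1 / (M i : ℝ))) := by
  classical
  have h1 : ∀ B : ∀ i, G i → Fin (M i),
      (if ∀ i, B i (y i) = b i then (1:ℝ) else 0) * (if ∀ i, B i (z i) = b i then (1:ℝ) else 0)
        = ∏ i, if B i (y i) = b i ∧ B i (z i) = b i then (1:ℝ) else 0 := by
    intro B
    rw [stmt9_ite_mul]
    have hiff : ((∀ i, B i (y i) = b i) ∧ (∀ i, B i (z i) = b i))
        ↔ (∀ i, B i (y i) = b i ∧ B i (z i) = b i) :=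
      ⟨fun h i => ⟨h.1 i, h.2 i⟩, fun h => ⟨fun i => (h i).1, fun i => (h i).2⟩⟩
    exact (if_congr hiff rfl rfl).trans (stmt9_forall_prod _)
  simp only [h1]
  rw [show (∑ B : ∀ i, G i → Fin (M i), ∏ i, if B i (y i) = b i ∧ B i (z i) = b i then (1:ℝ) else 0)
      = ∏ i, ∑ f : G i → Fin (M i), (if f (y i) = b i ∧ f (z i) = b i then (1:ℝ) else 0) from
    stmt9_sum_pi_prod (fun i => G i → Fin (M i))
      (fun i f => if f (y i) = b i ∧ f (z i) = b i then (1:ℝ) else 0)]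
  have h2 : ∀ i, (∑ f : G i → Fin (M i), (if f (y i) = b i ∧ f (z i) = b i then (1:ℝ) else 0))
      = (Fintype.card (G i → Fin (M i)) : ℝ) *
          (if y i = z i then 1 / (M i : ℝ) else (1 / (M i : ℝ)) * (1 / (M i : ℝ))) := by
    intro i
    by_cases h : y i = z i
    · rw [if_pos h]
      have h3 : ∀ f : G i → Fin (M i),
          ((f (y i) = b i ∧ f (z i) = b i)) ↔ (f (y i) = b i) := by
        intro f; rw [h]; exact and_self_iff
      simp only [h3]
      rw [stmt9_count1 (y i) (b i), Fintype.card_fin]; ring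
    · rw [if_neg h, stmt9_count2 (y i) (z i) (Ne.symm h) (b i), Fintype.card_fin]; ring
  simp only [h2]
  rw [Finset.prod_mul_distrib, ← Nat.cast_prod, ← Fintype.card_pi]

private lemma stmt9_avg_abs {ι : Type*} [Fintype ι] (f : ι → ℝ)
    (hD : 0 < (Fintype.card ι : ℝ)) :
    (∑ i, |f i|) / (Fintype.card ι : ℝ)
      ≤ Real.sqrt ((∑ i, f i ^ 2) / (Fintype.card ι : ℝ)) := by
  have h1 : (∑ i, |f i|) ^ 2 ≤ (Fintype.card ι : ℝ) * ∑ i, f i ^ 2 := by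
    have := sq_sum_le_card_mul_sum_sq (s := (Finset.univ : Finset ι))
      (f := fun i => |f i|)
    simpa [sq_abs, Finset.card_univ] using this
  have hnn : 0 ≤ (∑ i, |f i|) / (Fintype.card ι : ℝ) := by positivity
  rw [← Real.sqrt_sq hnn]
  apply Real.sqrt_le_sqrt
  rw [div_pow, div_le_div_iff₀ (by positivity) hD]
  calc (∑ i, |f i|) ^ 2 * (Fintype.card ι : ℝ)
      ≤ ((Fintype.card ι : ℝ) * ∑ i, f i ^ 2) * (Fintype.card ι : ℝ) :=
        mul_le_mul_of_nonneg_right h1 hD.le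
    _ = (∑ i, f i ^ 2) * (Fintype.card ι : ℝ) ^ 2 := by ring

/-- For `x^n` in the support of `p` with type `π_X̄`, a conditional
n-type `π`, and bin indices `b`:
`E_𝔅|Z_π − E_𝔅 Z_π| ≤ l_π(x^n) · sqrt(∑_{∅≠S} (1/p^U_S) · #{(y,ỹ) ∈ 𝒦_S, both in 𝒯^n_π(x^n)})`,
where `l_π(x^n) = p(y^n | x^n)` for every `y^n` in the conditional type class. -/
theorem stmt_9 {T n : ℕ} (Y : Fin T → Type*) [∀ i, Fintype (Y i)] [∀ i, DecidableEq (Y i)]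
    {𝒳 : Type*} [Fintype 𝒳]
    (p : (∀ i, Y i) × 𝒳 → ℝ)
    (hp0 : ∀ w, 0 ≤ p w) (hp1 : ∑ w, p w = 1)
    (R : Fin T → ℝ) (hR : ∀ i, 0 ≤ R i)
    (M : Fin T → ℕ) (hM : ∀ i, (M i : ℝ) = 2 ^ ((n : ℝ) * R i))
    (x : Fin n → 𝒳) (hsupp : 0 < ∏ t, ∑ ys : ∀ i, Y i, p (ys, x t))
    (π : (∀ i, Y i) × 𝒳 → ℝ)
    (hπ0 : ∀ w, 0 ≤ π w) (hπ1 : ∑ w, π w = 1)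
    (hπtype : ∀ w, ∃ k : ℕ, k ≤ n ∧ π w = (k : ℝ) / n)
    (hπmarg : ∀ a : 𝒳, ∑ ys : ∀ i, Y i, π (ys, a) =
      ((Finset.univ.filter (fun t : Fin n => x t = a)).card : ℝ) / n)
    (l : ℝ)
    (hl : ∀ y ∈ condTypeClass Y x π,
      l = (∏ t, p (fun i => y i t, x t)) / ∏ t, ∑ ys : ∀ i, Y i, p (ys, x t))
    (b : ∀ i, Fin (M i)) :
    binExp Y M (fun B => |Zbin Y x π l b B - binExp Y M (Zbin Y x π l b)|) ≤
      l * Real.sqrt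
        (∑ S ∈ Finset.univ.powerset.filter (fun S : Finset (Fin T) => S.Nonempty),
          (∏ i ∈ S, (M i : ℝ)) *
            ∑ y : ∀ i, Fin n → Y i, ∑ yt : ∀ i, Fin n → Y i,
              (if (∀ i ∈ S, y i = yt i) ∧ (∀ i ∉ S, y i ≠ yt i) ∧
                  y ∈ condTypeClass Y x π ∧ yt ∈ condTypeClass Y x π then (1 : ℝ)
              else 0)) := by
  classical
  have hMpos : ∀ i, 0 < M i := fun i => (b i).pos
  have hM0 : ∀ i, (0:ℝ) < (M i : ℝ) := fun i => by exact_mod_cast hMpos i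
  have hM1 : ∀ i, (1:ℝ) ≤ (M i : ℝ) := fun i => by exact_mod_cast hMpos i
  set 𝒯 : Finset (∀ i, Fin n → Y i) := condTypeClass Y x π with h𝒯def
  set pU : ℝ := ∏ i, (1 / (M i : ℝ)) with hpUdef
  have hpU : 0 < pU := by
    rw [hpUdef]
    exact Finset.prod_pos fun i _ => by have := hM0 i; positivity
  haveI hnon : Nonempty (∀ i, (Fin n → Y i) → Fin (M i)) := ⟨fun i _ => b i⟩
  set D : ℝ := (Fintype.card (∀ i, (Fin n → Y i) → Fin (M i)) : ℝ) with hDdef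
  have hD : 0 < D := by rw [hDdef]; exact_mod_cast Fintype.card_pos
  set Sd : (∀ i, Fin n → Y i) → (∀ i, Fin n → Y i) → Finset (Fin T) :=
    fun y z => Finset.univ.filter (fun i => y i = z i) with hSddef
  set A : ℝ := ∑ S ∈ Finset.univ.powerset.filter (fun S : Finset (Fin T) => S.Nonempty),
      (∏ i ∈ S, (M i : ℝ)) *
        ∑ y : ∀ i, Fin n → Y i, ∑ yt : ∀ i, Fin n → Y i,
          (if (∀ i ∈ S, y i = yt i) ∧ (∀ i ∉ S, y i ≠ yt i) ∧
              y ∈ 𝒯 ∧ yt ∈ 𝒯 then (1 : ℝ)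
          else 0) with hAdef
  have hN : ∀ B : ∀ i, (Fin n → Y i) → Fin (M i),
      Nbin Y x π b B = ∑ y ∈ 𝒯, (if ∀ i, B i (y i) = b i then (1:ℝ) else 0) := by
    intro B
    have h0 : Nbin Y x π b B
        = ((𝒯.filter (fun y => ∀ i, B i (y i) = b i)).card : ℝ) := rfl
    rw [h0, Finset.card_filter]
    push_cast
    rfl
  by_cases hTne : 𝒯.Nonempty
  · -- main case
    obtain ⟨y0, hy0⟩ := hTne
    have hl0 : 0 ≤ l := by
      rw [hl y0 hy0]
      exact div_nonneg (Finset.prod_nonneg fun t _ => hp0 _) hsupp.le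
    have hC1 : ∀ y : ∀ i, Fin n → Y i,
        (∑ B : ∀ i, (Fin n → Y i) → Fin (M i),
          (if ∀ i, B i (y i) = b i then (1:ℝ) else 0)) = D * pU := by
      intro y
      rw [stmt9_binCount1 (fun i => Fin n → Y i) M b y]
    have hC2 : ∀ y z : ∀ i, Fin n → Y i,
        (∑ B : ∀ i, (Fin n → Y i) → Fin (M i),
            (if ∀ i, B i (y i) = b i then (1:ℝ) else 0) *
              (if ∀ i, B i (z i) = b i then (1:ℝ) else 0))
          = D * (pU * pU * ∏ i ∈ Sd y z, (M i : ℝ)) := by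
      intro y z
      rw [stmt9_binCount2 (fun i => Fin n → Y i) M b y z]
      congr 1
      rw [hSddef]
      dsimp only
      rw [Finset.prod_filter, hpUdef, ← Finset.prod_mul_distrib, ← Finset.prod_mul_distrib]
      refine Finset.prod_congr rfl fun i _ => ?_
      by_cases h : y i = z i
      · rw [if_pos h, if_pos h]
        have hMne : (M i : ℝ) ≠ 0 := (hM0 i).ne'
        field_simp
      · rw [if_neg h, if_neg h, mul_one]
    have hSN : ∑ B : ∀ i, (Fin n → Y i) → Fin (M i), Nbin Y x π b B
        = (𝒯.card : ℝ) * (D * pU) := by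
      simp only [hN]
      rw [Finset.sum_comm]
      have h2 : ∑ y ∈ 𝒯, (∑ B : ∀ i, (Fin n → Y i) → Fin (M i),
          (if ∀ i, B i (y i) = b i then (1:ℝ) else 0)) = ∑ _y ∈ 𝒯, (D * pU) :=
        Finset.sum_congr rfl fun y _ => hC1 y
      rw [h2, Finset.sum_const, nsmul_eq_mul]
    have hZdef : ∀ B, Zbin Y x π l b B = Nbin Y x π b B * l / pU := fun B => rfl
    have hSZ : ∑ B : ∀ i, (Fin n → Y i) → Fin (M i), Zbin Y x π l b B
        = (𝒯.card : ℝ) * D * l := by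
      simp only [hZdef]
      rw [← Finset.sum_div, ← Finset.sum_mul, hSN]
      have hpUne : pU ≠ 0 := hpU.ne'
      field_simp
    have hm : binExp Y M (Zbin Y x π l b) = (𝒯.card : ℝ) * l := by
      have h0 : binExp Y M (Zbin Y x π l b)
          = (∑ B : ∀ i, (Fin n → Y i) → Fin (M i), Zbin Y x π l b B) / D := rfl
      rw [h0, hSZ]
      have hDne : D ≠ 0 := hD.ne'
      field_simp
    set m : ℝ := binExp Y M (Zbin Y x π l b) with hmdef
    have hSN2 : ∑ B : ∀ i, (Fin n → Y i) → Fin (M i), (Nbin Y x π b B)^2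
        = (D * (pU * pU)) * ∑ y ∈ 𝒯, ∑ z ∈ 𝒯, ∏ i ∈ Sd y z, (M i : ℝ) := by
      have h1 : ∀ B : ∀ i, (Fin n → Y i) → Fin (M i), (Nbin Y x π b B)^2
          = ∑ y ∈ 𝒯, ∑ z ∈ 𝒯, (if ∀ i, B i (y i) = b i then (1:ℝ) else 0) *
              (if ∀ i, B i (z i) = b i then (1:ℝ) else 0) := by
        intro B; rw [hN B, sq, Finset.sum_mul_sum]
      simp only [h1]
      rw [Finset.sum_comm]
      have h2 : ∑ y ∈ 𝒯, ∑ B : ∀ i, (Fin n → Y i) → Fin (M i), ∑ z ∈ 𝒯,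
            (if ∀ i, B i (y i) = b i then (1:ℝ) else 0) *
              (if ∀ i, B i (z i) = b i then (1:ℝ) else 0)
          = ∑ y ∈ 𝒯, ∑ z ∈ 𝒯, D * (pU * pU * ∏ i ∈ Sd y z, (M i : ℝ)) :=
        Finset.sum_congr rfl fun y _ => by
          rw [Finset.sum_comm]
          exact Finset.sum_congr rfl fun z _ => hC2 y z
      rw [h2, Finset.mul_sum]
      refine Finset.sum_congr rfl fun y _ => ?_
      rw [Finset.mul_sum]
      exact Finset.sum_congr rfl fun z _ => by ring
    have hSZ2 : ∑ B : ∀ i, (Fin n → Y i) → Fin (M i), (Zbin Y x π l b B)^2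
        = (D * l^2) * ∑ y ∈ 𝒯, ∑ z ∈ 𝒯, ∏ i ∈ Sd y z, (M i : ℝ) := by
      have h1 : ∀ B, (Zbin Y x π l b B)^2 = (Nbin Y x π b B)^2 * (l^2 / pU^2) := by
        intro B; rw [hZdef B]; ring
      simp only [h1]
      rw [← Finset.sum_mul, hSN2]
      have hpUne : pU ≠ 0 := hpU.ne'
      field_simp
    have hexp : ∑ B : ∀ i, (Fin n → Y i) → Fin (M i), (Zbin Y x π l b B - m)^2
        = (∑ B : ∀ i, (Fin n → Y i) → Fin (M i), (Zbin Y x π l b B)^2)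
            - 2*m*(∑ B : ∀ i, (Fin n → Y i) → Fin (M i), Zbin Y x π l b B) + D * m^2 := by
      have h1 : ∀ B, (Zbin Y x π l b B - m)^2
          = (Zbin Y x π l b B)^2 - 2*m*(Zbin Y x π l b B) + m^2 := fun B => by ring
      simp only [h1]
      rw [Finset.sum_add_distrib, Finset.sum_sub_distrib, ← Finset.mul_sum,
        Finset.sum_const, Finset.card_univ, nsmul_eq_mul]
    have hVd : ∑ y ∈ 𝒯, ∑ z ∈ 𝒯, ((∏ i ∈ Sd y z, (M i:ℝ)) - 1)
        = (∑ y ∈ 𝒯, ∑ z ∈ 𝒯, ∏ i ∈ Sd y z, (M i:ℝ)) - (𝒯.card:ℝ) * (𝒯.card:ℝ) := by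
      simp only [Finset.sum_sub_distrib, Finset.sum_const, nsmul_eq_mul, mul_one]
    have hvar : (∑ B : ∀ i, (Fin n → Y i) → Fin (M i), (Zbin Y x π l b B - m)^2) / D
        = l^2 * ∑ y ∈ 𝒯, ∑ z ∈ 𝒯, ((∏ i ∈ Sd y z, (M i:ℝ)) - 1) := by
      rw [hexp, hSZ2, hSZ, hm, hVd]
      have hDne : D ≠ 0 := hD.ne'
      field_simp
      ring_nf
    -- combinatorial part
    have hSdmem : ∀ (yy zz : ∀ i, Fin n → Y i) (i : Fin T), i ∈ Sd yy zz ↔ yy i = zz i := by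
      intro yy zz i
      rw [hSddef]
      simp
    have hSeq : ∀ (yy zz : ∀ i, Fin n → Y i) (S : Finset (Fin T)),
        (∀ i ∈ S, yy i = zz i) → (∀ i ∉ S, yy i ≠ zz i) → S = Sd yy zz := by
      intro yy zz S h1 h2
      ext i
      rw [hSdmem]
      constructor
      · exact fun hi => h1 i hi
      · intro h; by_contra hiS; exact h2 i hiS h
    have hSdy : ∀ (yy zz : ∀ i, Fin n → Y i), ∀ i ∈ Sd yy zz, yy i = zz i :=
      fun yy zz i hi => (hSdmem yy zz i).1 hi
    have hSdy' : ∀ (yy zz : ∀ i, Fin n → Y i), ∀ i ∉ Sd yy zz, yy i ≠ zz i :=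
      fun yy zz i hi h => hi ((hSdmem yy zz i).2 h)
    have hinner : ∀ yy zz : ∀ i, Fin n → Y i,
        (∑ S ∈ Finset.univ.powerset.filter (fun S : Finset (Fin T) => S.Nonempty),
          (∏ i ∈ S, (M i:ℝ)) * (if (∀ i ∈ S, yy i = zz i) ∧ (∀ i ∉ S, yy i ≠ zz i) ∧
              yy ∈ 𝒯 ∧ zz ∈ 𝒯 then (1:ℝ) else 0))
        = if yy ∈ 𝒯 ∧ zz ∈ 𝒯 ∧ (Sd yy zz).Nonempty then ∏ i ∈ Sd yy zz, (M i:ℝ) else 0 := by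
      intro yy zz
      by_cases hQ : yy ∈ 𝒯 ∧ zz ∈ 𝒯 ∧ (Sd yy zz).Nonempty
      · rw [if_pos hQ]
        rw [Finset.sum_eq_single_of_mem (Sd yy zz)
          (Finset.mem_filter.2 ⟨Finset.mem_powerset.2 (Finset.subset_univ _), hQ.2.2⟩)]
        · rw [if_pos ⟨hSdy yy zz, hSdy' yy zz, hQ.1, hQ.2.1⟩, mul_one]
        · intro S _ hne
          rw [if_neg, mul_zero]
          rintro ⟨h1, h2, -, -⟩
          exact hne (hSeq yy zz S h1 h2)
      · rw [if_neg hQ]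
        apply Finset.sum_eq_zero
        intro S hS
        rw [if_neg, mul_zero]
        rintro ⟨h1, h2, hy, hz⟩
        refine hQ ⟨hy, hz, ?_⟩
        rw [← hSeq yy zz S h1 h2]
        exact (Finset.mem_filter.1 hS).2
    have hswap : A = ∑ yy : ∀ i, Fin n → Y i, ∑ zz : ∀ i, Fin n → Y i,
        (if yy ∈ 𝒯 ∧ zz ∈ 𝒯 ∧ (Sd yy zz).Nonempty then ∏ i ∈ Sd yy zz, (M i:ℝ) else 0) := by
      rw [hAdef]
      simp only [Finset.mul_sum]
      rw [Finset.sum_comm]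
      refine Finset.sum_congr rfl fun yy _ => ?_
      rw [Finset.sum_comm]
      refine Finset.sum_congr rfl fun zz _ => ?_
      exact hinner yy zz
    have hmem : ∀ (f : (∀ i, Fin n → Y i) → ℝ),
        ∑ yy ∈ 𝒯, f yy = ∑ yy : ∀ i, Fin n → Y i, (if yy ∈ 𝒯 then f yy else 0) := by
      intro f
      rw [Finset.sum_ite_mem, Finset.univ_inter]
    have hRHS : (∑ yy : ∀ i, Fin n → Y i, ∑ zz : ∀ i, Fin n → Y i,
          (if yy ∈ 𝒯 ∧ zz ∈ 𝒯 ∧ (Sd yy zz).Nonempty then ∏ i ∈ Sd yy zz, (M i:ℝ) else 0))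
        = ∑ yy ∈ 𝒯, ∑ zz ∈ 𝒯,
            (if (Sd yy zz).Nonempty then ∏ i ∈ Sd yy zz, (M i:ℝ) else 0) := by
      rw [hmem (fun yy => ∑ zz ∈ 𝒯,
        (if (Sd yy zz).Nonempty then ∏ i ∈ Sd yy zz, (M i:ℝ) else 0))]
      refine Finset.sum_congr rfl fun yy _ => ?_
      by_cases hy : yy ∈ 𝒯
      · rw [if_pos hy, hmem (fun zz =>
          if (Sd yy zz).Nonempty then ∏ i ∈ Sd yy zz, (M i:ℝ) else 0)]
        refine Finset.sum_congr rfl fun zz _ => ?_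
        by_cases hz : zz ∈ 𝒯
        · rw [if_pos hz]
          by_cases hp : (Sd yy zz).Nonempty
          · rw [if_pos ⟨hy, hz, hp⟩, if_pos hp]
          · rw [if_neg (by tauto), if_neg hp]
        · rw [if_neg hz, if_neg (by tauto)]
      · rw [if_neg hy]
        apply Finset.sum_eq_zero
        intro zz _
        rw [if_neg (by tauto)]
    have hVA : (∑ y ∈ 𝒯, ∑ z ∈ 𝒯, ((∏ i ∈ Sd y z, (M i:ℝ)) - 1)) ≤ A := by
      rw [hswap, hRHS]
      refine Finset.sum_le_sum fun yy _ => Finset.sum_le_sum fun zz _ => ?_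
      by_cases hp : (Sd yy zz).Nonempty
      · rw [if_pos hp]; linarith
      · rw [if_neg hp]
        rw [Finset.not_nonempty_iff_eq_empty] at hp
        rw [hp, Finset.prod_empty]
        norm_num
    have hstep : binExp Y M (fun B => |Zbin Y x π l b B - m|)
        ≤ Real.sqrt ((∑ B : ∀ i, (Fin n → Y i) → Fin (M i), (Zbin Y x π l b B - m)^2) / D) := by
      have h0 : binExp Y M (fun B => |Zbin Y x π l b B - m|)
          = (∑ B : ∀ i, (Fin n → Y i) → Fin (M i), |Zbin Y x π l b B - m|) / D := rfl
      rw [h0]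
      exact stmt9_avg_abs (fun B => Zbin Y x π l b B - m) hD
    calc binExp Y M (fun B => |Zbin Y x π l b B - m|)
        ≤ Real.sqrt ((∑ B : ∀ i, (Fin n → Y i) → Fin (M i), (Zbin Y x π l b B - m)^2) / D) :=
          hstep
      _ = Real.sqrt (l^2 * ∑ y ∈ 𝒯, ∑ z ∈ 𝒯, ((∏ i ∈ Sd y z, (M i:ℝ)) - 1)) := by rw [hvar]
      _ ≤ Real.sqrt (l^2 * A) := by
          apply Real.sqrt_le_sqrt
          exact mul_le_mul_of_nonneg_left hVA (sq_nonneg l)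
      _ = l * Real.sqrt A := by
          rw [Real.sqrt_mul (sq_nonneg l), Real.sqrt_sq hl0]
  · -- empty type class
    rw [Finset.not_nonempty_iff_eq_empty] at hTne
    have hZ0 : ∀ B, Zbin Y x π l b B = 0 := by
      intro B
      have h0 : Zbin Y x π l b B
          = ((𝒯.filter (fun y => ∀ i, B i (y i) = b i)).card : ℝ) * l / ∏ i, (1/(M i:ℝ)) := rfl
      rw [h0, hTne]
      simp
    have hbe : binExp Y M (Zbin Y x π l b) = 0 := by
      have h0 : binExp Y M (Zbin Y x π l b)
          = (∑ B : ∀ i, (Fin n → Y i) → Fin (M i), Zbin Y x π l b B) / D := rfl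
      rw [h0]
      simp only [hZ0]
      simp
    have hL : binExp Y M (fun B => |Zbin Y x π l b B - binExp Y M (Zbin Y x π l b)|) = 0 := by
      have h0 : binExp Y M (fun B => |Zbin Y x π l b B - binExp Y M (Zbin Y x π l b)|)
          = (∑ B : ∀ i, (Fin n → Y i) → Fin (M i),
              |Zbin Y x π l b B - binExp Y M (Zbin Y x π l b)|) / D := rfl
      rw [h0]
      simp only [hZ0, hbe]
      simp
    rw [hL]
    have hA0 : A = 0 := by
      rw [hAdef]
      apply Finset.sum_eq_zero
      intro S _
      rw [mul_eq_zero]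
      right
      apply Finset.sum_eq_zero; intro yy _
      apply Finset.sum_eq_zero; intro zz _
      rw [if_neg]
      rintro ⟨-, -, hy, -⟩
      rw [hTne] at hy
      exact absurd hy (Finset.notMem_empty _)
    rw [hA0, Real.sqrt_zero, mul_zero]
end

section
/- Let π be a joint n-type on 𝒴_{[1:T]} × 𝒳 and let x^n ∈ 𝒳^n have type equal to the 𝒳-marginal π_X̄ of π. Then for every S ⊆ [1:T]: ∑_{(y^n_{[1:T]}, ỹ^n_{[1:T]}) ∈ 𝒦_S} 1( y^n_{[1:T]} ∈ 𝒯^n_{π_{Y_{[1:T]}|X̄}}(x^n) and ỹ^n_{[1:T]} ∈ 𝒯^n_{π_{Y_{[1:T]}|X̄}}(x^n) ) ≤ |𝒯^n_{π_{Y_{[1:T]},X̄}}|² / ( |𝒯^n_{π_X̄}| · |𝒯^n_{π_{Y_S,X̄}}| ), where π_{Y_S,X̄} denotes the (𝒴_S × 𝒳)-marginal of π and 𝒯^n_ρ denotes the type class of a joint n-type ρ (the set of sequences whose empirical distribution is ρ). -/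
open Finset

attribute [local instance] Classical.propDecidable

/-- The joint type class `𝒯^n_{π_{Y_{[1:T]},X̄}}`: pairs of sequences whose joint
empirical distribution is `π`. -/
noncomputable def jointTypeClass {T : ℕ} (n : ℕ) (Y : Fin T → Type*) [∀ i, Fintype (Y i)]
    {𝒳 : Type*} [Fintype 𝒳] (π : (∀ i, Y i) × 𝒳 → ℝ) :
    Finset ((∀ i, Fin n → Y i) × (Fin n → 𝒳)) :=
  Finset.univ.filter (fun w => ∀ (ys : ∀ i, Y i) (a : 𝒳),
    π (ys, a) =
      ((Finset.univ.filter
        (fun t : Fin n => (fun i => w.1 i t) = ys ∧ w.2 t = a)).card : ℝ) / n)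

/-- The type class `𝒯^n_{π_X̄}` of the `𝒳`-marginal of `π`. -/
noncomputable def typeClassX {T : ℕ} (n : ℕ) (Y : Fin T → Type*) [∀ i, Fintype (Y i)]
    {𝒳 : Type*} [Fintype 𝒳] (π : (∀ i, Y i) × 𝒳 → ℝ) : Finset (Fin n → 𝒳) :=
  Finset.univ.filter (fun x : Fin n → 𝒳 => ∀ a : 𝒳,
    (∑ ys : ∀ i, Y i, π (ys, a)) =
      ((Finset.univ.filter (fun t : Fin n => x t = a)).card : ℝ) / n)

/-- The type class `𝒯^n_{π_{Y_S,X̄}}` of the `(𝒴_S × 𝒳)`-marginal of `π`. -/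
noncomputable def typeClassYSX {T : ℕ} (n : ℕ) (Y : Fin T → Type*) [∀ i, Fintype (Y i)]
    {𝒳 : Type*} [Fintype 𝒳] (S : Finset (Fin T)) (π : (∀ i, Y i) × 𝒳 → ℝ) :
    Finset ((∀ i : {i // i ∈ S}, Fin n → Y i) × (Fin n → 𝒳)) :=
  Finset.univ.filter (fun w => ∀ (ysS : ∀ i : {i // i ∈ S}, Y i) (a : 𝒳),
    (∑ ys : ∀ i, Y i, if (∀ i : {i // i ∈ S}, ys i = ysS i) then π (ys, a) else 0) =
      ((Finset.univ.filter
        (fun t : Fin n => (fun i : {i // i ∈ S} => w.1 i t) = ysS ∧ w.2 t = a)).card : ℝ) / n)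

/-!
Type classes are the orbits of `Equiv.Perm (Fin n)` acting on sequences by reindexing, and
projecting a sequence letterwise along `q : A → B` commutes with this action. So all fibres of
the projection from the type class of `π` onto that of its marginal `q_* π` have the same size,
and `|𝒯_π| = |𝒯_{q_* π}| · |fibre|`. In the pairs `(y, ỹ)` to be counted, `y` ranges over a
fibre of the `X̄`-projection and `ỹ` over the fibre of the `(Y_S, X̄)`-projection through
`(y, x)`; multiplying the two fibre sizes gives `|𝒯_π|² / (|𝒯_{π_X̄}| · |𝒯_{π_{Y_S,X̄}}|)`.
-/

section TypeClass

variable {n : ℕ} {A B C : Type*}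

noncomputable def seqCount (f : Fin n → A) (a : A) : ℕ :=
  (Finset.univ.filter fun t => f t = a).card

lemma seqCount_comp_perm (f : Fin n → A) (σ : Equiv.Perm (Fin n)) (a : A) :
    seqCount (f ∘ σ) a = seqCount f a := by
  simp only [seqCount, Finset.card_filter]
  exact Fintype.sum_equiv σ _ _ fun _ => rfl

lemma exists_perm_comp_eq_of_seqCount_eq {f g : Fin n → A}
    (h : ∀ a, seqCount f a = seqCount g a) : ∃ σ : Equiv.Perm (Fin n), f ∘ σ = g := by
  have e : ∀ a, {t // g t = a} ≃ {t // f t = a} := fun a =>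
    Fintype.equivOfCardEq <| by simp only [Fintype.card_subtype]; exact (h a).symm
  exact ⟨Equiv.ofFiberEquiv e, funext (Equiv.ofFiberEquiv_map e)⟩

variable [Fintype A]

lemma seqCount_comp (q : A → B) (f : Fin n → A) (b : B) :
    seqCount (q ∘ f) b = ∑ a with q a = b, seqCount f a := by
  rw [seqCount, card_eq_sum_card_fiberwise (f := f) (t := univ.filter (q · = b))
    fun t ht => by simpa using ht]
  refine sum_congr rfl fun a ha => ?_
  rw [seqCount, filter_filter]
  refine congrArg card (filter_congr fun t _ => ⟨And.right, fun h => ⟨?_, h⟩⟩)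
  simpa [h] using ha

noncomputable def typeClass (n : ℕ) (π : A → ℝ) : Finset (Fin n → A) :=
  Finset.univ.filter fun f => ∀ a, π a = seqCount f a / n

noncomputable def marginal (q : A → B) (π : A → ℝ) (b : B) : ℝ :=
  ∑ a with q a = b, π a

variable {π : A → ℝ}

lemma mem_typeClass {f : Fin n → A} :
    f ∈ typeClass n π ↔ ∀ a, π a = seqCount f a / n := by
  simp [typeClass]

lemma seqCount_eq_of_mem_typeClass {f g : Fin n → A} (hf : f ∈ typeClass n π)
    (hg : g ∈ typeClass n π) (a : A) : seqCount f a = seqCount g a := by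
  rcases Nat.eq_zero_or_pos n with rfl | hn
  · simp [seqCount]
  · have h := (mem_typeClass.1 hf a).symm.trans (mem_typeClass.1 hg a)
    exact_mod_cast (div_left_inj' (by positivity)).1 h

lemma comp_perm_mem_typeClass {f : Fin n → A} (hf : f ∈ typeClass n π)
    (σ : Equiv.Perm (Fin n)) :
    f ∘ σ ∈ typeClass n π := by
  simpa only [mem_typeClass, seqCount_comp_perm] using hf

lemma comp_mem_typeClass_marginal [Fintype B] (q : A → B) {f : Fin n → A}
    (hf : f ∈ typeClass n π) :
    q ∘ f ∈ typeClass n (marginal q π) := by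
  rw [mem_typeClass] at hf ⊢
  intro b
  rw [marginal, seqCount_comp, Nat.cast_sum, sum_div]
  exact sum_congr rfl fun a _ => hf a

noncomputable def typeClassFiber (n : ℕ) (π : A → ℝ) (q : A → B) (g : Fin n → B) :
    Finset (Fin n → A) :=
  (typeClass n π).filter fun f => q ∘ f = g

lemma card_typeClassFiber_eq (q : A → B) {g₁ g₂ : Fin n → B}
    (h : ∀ b, seqCount g₁ b = seqCount g₂ b) :
    #(typeClassFiber n π q g₁) = #(typeClassFiber n π q g₂) := by
  obtain ⟨σ, hσ⟩ := exists_perm_comp_eq_of_seqCount_eq h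
  have hσ' : g₂ ∘ σ.symm = g₁ := by
    rw [← hσ, Function.comp_assoc, σ.self_comp_symm]; rfl
  refine card_nbij' (· ∘ σ) (· ∘ σ.symm) ?_ ?_ ?_ ?_
  · intro f hf
    simp only [typeClassFiber, mem_coe, mem_filter] at hf ⊢
    exact ⟨comp_perm_mem_typeClass hf.1 σ, by rw [← Function.comp_assoc, hf.2, hσ]⟩
  · intro f hf
    simp only [typeClassFiber, mem_coe, mem_filter] at hf ⊢
    exact ⟨comp_perm_mem_typeClass hf.1 σ.symm, by rw [← Function.comp_assoc, hf.2, hσ']⟩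
  · intro f _
    simp [Function.comp_assoc]
  · intro f _
    simp [Function.comp_assoc]

lemma card_typeClass_eq_mul [Fintype B] (q : A → B) {g : Fin n → B}
    (hg : g ∈ typeClass n (marginal q π)) :
    #(typeClass n π) = #(typeClass n (marginal q π)) * #(typeClassFiber n π q g) := by
  rw [card_eq_sum_card_fiberwise fun f hf => comp_mem_typeClass_marginal q hf]
  exact sum_const_nat fun g' hg' =>
    card_typeClassFiber_eq q fun b => seqCount_eq_of_mem_typeClass hg' hg b

noncomputable def typeClassPairs (n : ℕ) (π : A → ℝ) (p : A → B) (q : A → C)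
    (x : Fin n → B) : Finset ((Fin n → A) × (Fin n → A)) :=
  (typeClass n π ×ˢ typeClass n π).filter fun w =>
    p ∘ w.1 = x ∧ p ∘ w.2 = x ∧ q ∘ w.1 = q ∘ w.2

lemma card_typeClassPairs_mul_le [Fintype C] (p : A → B) (q : A → C) (x : Fin n → B) :
    #(typeClassPairs n π p q x) * #(typeClass n (marginal q π)) ≤
      #(typeClassFiber n π p x) * #(typeClass n π) := by
  have hsub : typeClassPairs n π p q x ⊆
      (typeClassFiber n π p x).biUnion fun f => {f} ×ˢ typeClassFiber n π q (q ∘ f) := by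
    rintro ⟨f, f'⟩ hw
    simp only [typeClassPairs, mem_filter, mem_product] at hw
    simp only [mem_biUnion, mem_product, mem_singleton, typeClassFiber, mem_filter]
    exact ⟨f, ⟨hw.1.1, hw.2.1⟩, rfl, hw.1.2, hw.2.2.2.symm⟩
  calc #(typeClassPairs n π p q x) * #(typeClass n (marginal q π))
      ≤ (∑ f ∈ typeClassFiber n π p x, #(typeClassFiber n π q (q ∘ f))) *
          #(typeClass n (marginal q π)) := by
        gcongr
        refine (card_le_card hsub).trans (card_biUnion_le.trans_eq ?_)
        simp only [card_product, card_singleton, one_mul]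
    _ = ∑ f ∈ typeClassFiber n π p x, #(typeClass n π) := by
        rw [sum_mul]
        refine sum_congr rfl fun f hf => ?_
        rw [mul_comm, card_typeClass_eq_mul q
          (comp_mem_typeClass_marginal q (mem_filter.1 hf).1)]
    _ = #(typeClassFiber n π p x) * #(typeClass n π) := sum_const_nat fun _ _ => rfl

lemma card_typeClassPairs_le [Fintype B] [Fintype C] (p : A → B) (q : A → C) {x : Fin n → B}
    (hx : x ∈ typeClass n (marginal p π)) :
    (#(typeClassPairs n π p q x) : ℝ) ≤
      (#(typeClass n π) : ℝ) ^ 2 /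
        ((#(typeClass n (marginal p π)) : ℝ) * #(typeClass n (marginal q π))) := by
  rcases (typeClassPairs n π p q x).eq_empty_or_nonempty with hempty | ⟨w, hw⟩
  · rw [hempty, card_empty, Nat.cast_zero]
    positivity
  have hK : 0 < #(typeClass n (marginal q π)) := card_pos.2
    ⟨_, comp_mem_typeClass_marginal q (mem_product.1 (mem_filter.1 hw).1).1⟩
  have hX : 0 < #(typeClass n (marginal p π)) := card_pos.2 ⟨x, hx⟩
  rw [le_div_iff₀ (by positivity)]
  have key : #(typeClassPairs n π p q x) *
      (#(typeClass n (marginal p π)) * #(typeClass n (marginal q π))) ≤ #(typeClass n π) ^ 2 :=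
    calc _ = #(typeClass n (marginal p π)) *
          (#(typeClassPairs n π p q x) * #(typeClass n (marginal q π))) := by ring
      _ ≤ #(typeClass n (marginal p π)) * (#(typeClassFiber n π p x) * #(typeClass n π)) :=
          Nat.mul_le_mul_left _ (card_typeClassPairs_mul_le p q x)
      _ = #(typeClass n π) ^ 2 := by rw [← mul_assoc, ← card_typeClass_eq_mul p hx, sq]
  exact_mod_cast key

end TypeClass

section Zip

variable {n : ℕ} {ι X : Type*} {Y : ι → Type*}

def zipSeq : (∀ i, Fin n → Y i) × (Fin n → X) ≃ (Fin n → (∀ i, Y i) × X) :=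
  ((Equiv.piComm _).prodCongr (Equiv.refl _)).trans (Equiv.arrowProdEquivProdArrow _ _ _).symm

@[simp]
lemma zipSeq_apply (w : (∀ i, Fin n → Y i) × (Fin n → X)) (t : Fin n) :
    zipSeq w t = (fun i => w.1 i t, w.2 t) := rfl

end Zip

section JointSequences

variable {T n : ℕ} {Y : Fin T → Type*} [∀ i, Fintype (Y i)] {𝒳 : Type*} [Fintype 𝒳]
  {π : (∀ i, Y i) × 𝒳 → ℝ}

lemma mem_jointTypeClass_iff {w : (∀ i, Fin n → Y i) × (Fin n → 𝒳)} :
    w ∈ jointTypeClass n Y π ↔ zipSeq w ∈ typeClass n π := by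
  simp [jointTypeClass, mem_typeClass, seqCount]

lemma mem_condTypeClass_iff {x : Fin n → 𝒳} {y : ∀ i, Fin n → Y i} :
    y ∈ condTypeClass Y x π ↔ zipSeq (y, x) ∈ typeClass n π := by
  simp [condTypeClass, mem_typeClass, seqCount]

lemma card_jointTypeClass : #(jointTypeClass n Y π) = #(typeClass n π) :=
  card_equiv zipSeq fun _ => mem_jointTypeClass_iff

lemma marginal_snd (a : 𝒳) : marginal Prod.snd π a = ∑ ys : ∀ i, Y i, π (ys, a) := by
  simp [marginal, sum_filter, Fintype.sum_prod_type]

lemma typeClassX_eq : typeClassX n Y π = typeClass n (marginal Prod.snd π) := by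
  ext x
  simp [typeClassX, mem_typeClass, seqCount, marginal_snd]

lemma marginal_restrict (S : Finset (Fin T)) (ysS : ∀ i : S, Y i) (a : 𝒳) :
    marginal (Prod.map S.restrict id) π (ysS, a) =
      ∑ ys : ∀ i, Y i, if (∀ i : S, ys i = ysS i) then π (ys, a) else 0 := by
  simp [marginal, sum_filter, Fintype.sum_prod_type, ite_and, funext_iff, Finset.restrict]

lemma card_typeClassYSX (S : Finset (Fin T)) :
    #(typeClassYSX n Y S π) = #(typeClass n (marginal (Prod.map S.restrict id) π)) :=
  card_equiv zipSeq fun _ => by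
    simp [typeClassYSX, mem_typeClass, seqCount, marginal_restrict]

lemma card_agreeing_condTypeClass_le (x : Fin n → 𝒳) (S : Finset (Fin T)) :
    #{w : (∀ i, Fin n → Y i) × (∀ i, Fin n → Y i) | (∀ i ∈ S, w.1 i = w.2 i) ∧
        w.1 ∈ condTypeClass Y x π ∧ w.2 ∈ condTypeClass Y x π} ≤
      #(typeClassPairs n π Prod.snd (Prod.map S.restrict id) x) := by
  refine card_le_card_of_injOn (fun w => (zipSeq (w.1, x), zipSeq (w.2, x))) ?_ ?_
  · rintro ⟨y, y'⟩ hw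
    obtain ⟨-, hS, hy, hy'⟩ := mem_filter.1 hw
    simp only [typeClassPairs, mem_coe, mem_filter, mem_product, ← mem_condTypeClass_iff]
    exact ⟨⟨hy, hy'⟩, rfl, rfl,
      funext fun t => Prod.ext (funext fun i => congrFun (hS i i.2) t) rfl⟩
  · intro w _ w' _ h
    simp only [Prod.mk.injEq, zipSeq.apply_eq_iff_eq] at h
    exact Prod.ext h.1.1 h.2.1

end JointSequences

theorem stmt_10_general {T n : ℕ} (Y : Fin T → Type*) [∀ i, Fintype (Y i)]
    {𝒳 : Type*} [Fintype 𝒳]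
    (π : (∀ i, Y i) × 𝒳 → ℝ)
    (x : Fin n → 𝒳)
    (hx : ∀ a : 𝒳, ∑ ys : ∀ i, Y i, π (ys, a) =
      ((Finset.univ.filter (fun t : Fin n => x t = a)).card : ℝ) / n)
    (S : Finset (Fin T)) :
    ((Finset.univ.filter
        (fun w : (∀ i, Fin n → Y i) × (∀ i, Fin n → Y i) =>
          (∀ i ∈ S, w.1 i = w.2 i) ∧ (∀ i ∉ S, w.1 i ≠ w.2 i) ∧
            w.1 ∈ condTypeClass Y x π ∧ w.2 ∈ condTypeClass Y x π)).card : ℝ) ≤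
      ((jointTypeClass n Y π).card : ℝ) ^ 2 /
        (((typeClassX n Y π).card : ℝ) * ((typeClassYSX n Y S π).card : ℝ)) := by
  have hxX : x ∈ typeClass n (marginal Prod.snd π) := by
    rw [← typeClassX_eq]
    simpa [typeClassX] using hx
  rw [card_jointTypeClass, typeClassX_eq, card_typeClassYSX]
  refine le_trans ?_ (card_typeClassPairs_le _ _ hxX)
  refine Nat.cast_le.2 ((card_le_card ?_).trans (card_agreeing_condTypeClass_le x S))
  intro w hw
  simp only [mem_filter] at hw ⊢
  exact ⟨hw.1, hw.2.1, hw.2.2.2⟩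

/-- For a joint n-type `π` on `𝒴_{[1:T]} × 𝒳` and `x^n` of type `π_X̄`,
for every `S ⊆ [1:T]`:
`#{(y,ỹ) ∈ 𝒦_S : y,ỹ ∈ 𝒯^n_{π_{Y|X̄}}(x^n)} ≤ |𝒯^n_{π_{Y,X̄}}|² / (|𝒯^n_{π_X̄}|·|𝒯^n_{π_{Y_S,X̄}}|)`. -/
theorem stmt_10 {T n : ℕ} (Y : Fin T → Type*) [∀ i, Fintype (Y i)]
    {𝒳 : Type*} [Fintype 𝒳]
    (π : (∀ i, Y i) × 𝒳 → ℝ)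
    (hπ0 : ∀ w, 0 ≤ π w) (hπ1 : ∑ w, π w = 1)
    (hπtype : ∀ w, ∃ k : ℕ, k ≤ n ∧ π w = (k : ℝ) / n)
    (x : Fin n → 𝒳)
    (hx : ∀ a : 𝒳, ∑ ys : ∀ i, Y i, π (ys, a) =
      ((Finset.univ.filter (fun t : Fin n => x t = a)).card : ℝ) / n)
    (S : Finset (Fin T)) :
    ((Finset.univ.filter
        (fun w : (∀ i, Fin n → Y i) × (∀ i, Fin n → Y i) =>
          (∀ i ∈ S, w.1 i = w.2 i) ∧ (∀ i ∉ S, w.1 i ≠ w.2 i) ∧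
            w.1 ∈ condTypeClass Y x π ∧ w.2 ∈ condTypeClass Y x π)).card : ℝ) ≤
      ((jointTypeClass n Y π).card : ℝ) ^ 2 /
        (((typeClassX n Y π).card : ℝ) * ((typeClassYSX n Y S π).card : ℝ)) :=
  stmt_10_general Y π x hx S
end
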